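/- arXiv:2006.11818 — 10 statements merged into one kernel-verified Lean document; each statement's English description precedes it below -/
import Mathlib

section
/- Let $a_1,\dots,a_m$ and $p_1,\dots,p_m$ be nonnegative real numbers with $p_1>0$, and let $p>1$. Then $\sum_{n=1}^m \left(\frac{\sum_{i=1}^n a_i p_i}{\sum_{i=1}^n p_i}\right)^p p_n \le \left(\frac{p}{p-1}\right)^p \sum_{n=1}^m a_n^p p_n$. -/
/-!
Write `A n` for the weighted mean of `a 1, …, a n` and `W n = ∑_{i ≤ n} w i`. Since
`a n * w n = W n * A n - W (n - 1) * A (n - 1)`, Young's inequality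
`p * B * C ^ (p - 1) ≤ B ^ p + (p - 1) * C ^ p` yields the telescoping bound
`(p - 1) * A n ^ p * w n - p * a n * A n ^ (p - 1) * w n
  ≤ W (n - 1) * A (n - 1) ^ p - W n * A n ^ p`.
Summing gives `(p - 1) * ∑ A ^ p * w ≤ p * ∑ a * A ^ (p - 1) * w`, and Hölder's inequality
with weights `w` bounds the right-hand side by
`p * (∑ a ^ p * w) ^ (1 / p) * (∑ A ^ p * w) ^ (1 - 1 / p)`.
-/

open Finset

lemma Real.mul_mul_rpow_sub_one_le {p b c : ℝ} (hp : 1 < p) (hb : 0 ≤ b) (hc : 0 ≤ c) :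
    p * (b * c ^ (p - 1)) ≤ b ^ p + (p - 1) * c ^ p := by
  have hpq := Real.HolderConjugate.conjExponent hp
  have young := Real.young_inequality_of_nonneg hb (Real.rpow_nonneg hc (p - 1)) hpq
  rw [← Real.rpow_mul hc, hpq.sub_one_mul_conj, Real.conjExponent] at young
  have hp0 : 0 < p := by linarith
  have hp1 : 0 < p - 1 := by linarith
  calc p * (b * c ^ (p - 1)) ≤ p * (b ^ p / p + c ^ p / (p / (p - 1))) := by gcongr
    _ = b ^ p + (p - 1) * c ^ p := by field_simp

theorem Real.inner_mul_weight_le_Lp_mul_Lq_of_nonneg {ι : Type*} (s : Finset ι) {p q : ℝ}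
    (hpq : p.HolderConjugate q) {f g w : ι → ℝ} (hf : ∀ i ∈ s, 0 ≤ f i)
    (hg : ∀ i ∈ s, 0 ≤ g i) (hw : ∀ i ∈ s, 0 ≤ w i) :
    ∑ i ∈ s, f i * g i * w i ≤
      (∑ i ∈ s, f i ^ p * w i) ^ (1 / p) * (∑ i ∈ s, g i ^ q * w i) ^ (1 / q) := by
  have holder := Real.inner_le_Lp_mul_Lq_of_nonneg s hpq
    (f := fun i => f i * w i ^ (1 / p)) (g := fun i => g i * w i ^ (1 / q))
    (fun i hi => mul_nonneg (hf i hi) (Real.rpow_nonneg (hw i hi) _))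
    (fun i hi => mul_nonneg (hg i hi) (Real.rpow_nonneg (hw i hi) _))
  have split_weight :
      ∀ i ∈ s, f i * g i * w i = f i * w i ^ (1 / p) * (g i * w i ^ (1 / q)) := by
    intro i hi
    rw [mul_mul_mul_comm, ← Real.rpow_add' (hw i hi) (by simp [hpq.inv_add_inv_eq_one]),
      one_div, one_div, hpq.inv_add_inv_eq_one, Real.rpow_one]
  have rpow_weight : ∀ r : ℝ, 0 < r → ∀ h : ι → ℝ, (∀ i ∈ s, 0 ≤ h i) →
      ∀ i ∈ s, (h i * w i ^ (1 / r)) ^ r = h i ^ r * w i := by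
    intro r hr h hh i hi
    rw [Real.mul_rpow (hh i hi) (Real.rpow_nonneg (hw i hi) _), ← Real.rpow_mul (hw i hi),
      one_div_mul_cancel hr.ne', Real.rpow_one]
  rwa [sum_congr rfl split_weight, ← sum_congr rfl (rpow_weight p hpq.pos f hf),
    ← sum_congr rfl (rpow_weight q hpq.symm.pos g hg)]

lemma le_rpow_mul_of_le_mul_rpow_mul_rpow {p q c L R : ℝ} (hpq : p.HolderConjugate q)
    (hc : 0 ≤ c) (hL : 0 ≤ L) (hR : 0 ≤ R) (h : L ≤ c * (R ^ (1 / p) * L ^ (1 / q))) :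
    L ≤ c ^ p * R := by
  rcases hL.eq_or_lt with rfl | hL
  · positivity
  have hp := hpq.pos
  have root : L ^ (1 / p) ≤ c * R ^ (1 / p) := by
    refine le_of_mul_le_mul_right ?_ (Real.rpow_pos_of_pos hL (1 / q))
    rw [← Real.rpow_add hL, hpq.one_div_add_one_div, div_one, Real.rpow_one, mul_assoc]
    exact h
  calc L = (L ^ (1 / p)) ^ p := by
        rw [← Real.rpow_mul hL.le, one_div_mul_cancel hp.ne', Real.rpow_one]
    _ ≤ (c * R ^ (1 / p)) ^ p := by gcongr
    _ = c ^ p * R := by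
      rw [Real.mul_rpow hc (Real.rpow_nonneg hR _), ← Real.rpow_mul hR, one_div_mul_cancel hp.ne',
        Real.rpow_one]

noncomputable def weightedMean (a w : ℕ → ℝ) (n : ℕ) : ℝ :=
  (∑ i ∈ Icc 1 n, a i * w i) / ∑ i ∈ Icc 1 n, w i

section WeightedMean

variable {a w : ℕ → ℝ}

lemma weightedMean_nonneg (ha : ∀ i, 0 ≤ a i) (hw : ∀ i, 0 ≤ w i) (n : ℕ) :
    0 ≤ weightedMean a w n :=
  div_nonneg (sum_nonneg fun i _ => mul_nonneg (ha i) (hw i)) (sum_nonneg fun i _ => hw i)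

lemma sum_mul_weightedMean (hw : ∀ i, 0 ≤ w i) (n : ℕ) :
    (∑ i ∈ Icc 1 n, w i) * weightedMean a w n = ∑ i ∈ Icc 1 n, a i * w i := by
  by_cases hW : ∑ i ∈ Icc 1 n, w i = 0
  · rw [sum_eq_zero_iff_of_nonneg fun i _ => hw i] at hW
    rw [sum_eq_zero hW, zero_mul, sum_eq_zero fun i hi => by rw [hW i hi, mul_zero]]
  · exact mul_div_cancel₀ _ hW

lemma weightedMean_rpow_step {p : ℝ} (hp : 1 < p) (ha : ∀ i, 0 ≤ a i) (hw : ∀ i, 0 ≤ w i)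
    (k : ℕ) :
    (p - 1) * (weightedMean a w (k + 1) ^ p * w (k + 1))
        - p * (a (k + 1) * weightedMean a w (k + 1) ^ (p - 1) * w (k + 1))
      ≤ (∑ i ∈ Icc 1 k, w i) * weightedMean a w k ^ p
        - (∑ i ∈ Icc 1 (k + 1), w i) * weightedMean a w (k + 1) ^ p := by
  set B := weightedMean a w k
  set C := weightedMean a w (k + 1)
  set u := ∑ i ∈ Icc 1 k, w i
  set v := ∑ i ∈ Icc 1 (k + 1), w i
  have hB := weightedMean_nonneg ha hw k
  have hC := weightedMean_nonneg ha hw (k + 1)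
  have hv : v = u + w (k + 1) := sum_Icc_succ_top (Nat.le_add_left 1 k) w
  have hlast : a (k + 1) * w (k + 1) = v * C - u * B := by
    rw [sum_mul_weightedMean hw, sum_mul_weightedMean hw,
      sum_Icc_succ_top (Nat.le_add_left 1 k), add_sub_cancel_left]
  have hCp : C ^ p = C * C ^ (p - 1) := by
    rw [← Real.rpow_one_add' hC (by linarith), add_sub_cancel]
  have young := mul_le_mul_of_nonneg_left (Real.mul_mul_rpow_sub_one_le hp hB hC)
    (sum_nonneg fun i _ => hw i : 0 ≤ u)
  -- the two sides differ by `u` times the slack in Young's inequality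
  linear_combination young - p * C ^ (p - 1) * hlast + p * v * hCp - (p - 1) * C ^ p * hv

lemma sub_one_mul_sum_rpow_weightedMean_le {p : ℝ} (hp : 1 < p) (ha : ∀ i, 0 ≤ a i)
    (hw : ∀ i, 0 ≤ w i) (m : ℕ) :
    (p - 1) * ∑ n ∈ Icc 1 m, weightedMean a w n ^ p * w n
      ≤ p * ∑ n ∈ Icc 1 m, a n * weightedMean a w n ^ (p - 1) * w n := by
  have telescoped : ∀ j, (p - 1) * ∑ n ∈ Icc 1 j, weightedMean a w n ^ p * w n
      - p * ∑ n ∈ Icc 1 j, a n * weightedMean a w n ^ (p - 1) * w n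
      ≤ -((∑ i ∈ Icc 1 j, w i) * weightedMean a w j ^ p) := by
    intro j
    induction j with
    | zero => simp
    | succ k ih =>
      rw [sum_Icc_succ_top (Nat.le_add_left 1 k), sum_Icc_succ_top (Nat.le_add_left 1 k)]
      linarith [weightedMean_rpow_step hp ha hw k]
  have boundary : 0 ≤ (∑ i ∈ Icc 1 m, w i) * weightedMean a w m ^ p :=
    mul_nonneg (sum_nonneg fun i _ => hw i) (Real.rpow_nonneg (weightedMean_nonneg ha hw m) p)
  linarith [telescoped m]

end WeightedMean

theorem finite_weighted_hardy_general (m : ℕ) (p : ℝ) (hp : 1 < p) (a w : ℕ → ℝ)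
    (ha : ∀ i, 0 ≤ a i) (hw : ∀ i, 0 ≤ w i) :
    ∑ n ∈ Finset.Icc 1 m,
        ((∑ i ∈ Finset.Icc 1 n, a i * w i) / (∑ i ∈ Finset.Icc 1 n, w i)) ^ p * w n
      ≤ (p / (p - 1)) ^ p * ∑ n ∈ Finset.Icc 1 m, a n ^ p * w n := by
  have hpq : p.HolderConjugate (p / (p - 1)) := Real.HolderConjugate.conjExponent hp
  have hA := weightedMean_nonneg ha hw
  change ∑ n ∈ Icc 1 m, weightedMean a w n ^ p * w n ≤ _
  have holder := Real.inner_mul_weight_le_Lp_mul_Lq_of_nonneg (Icc 1 m) hpq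
    (fun n _ => ha n) (fun n _ => Real.rpow_nonneg (hA n) (p - 1)) (fun n _ => hw n)
  simp only [← Real.rpow_mul (hA _), hpq.sub_one_mul_conj] at holder
  refine le_rpow_mul_of_le_mul_rpow_mul_rpow hpq hpq.symm.nonneg
    (sum_nonneg fun n _ => mul_nonneg (Real.rpow_nonneg (hA n) p) (hw n))
    (sum_nonneg fun n _ => mul_nonneg (Real.rpow_nonneg (ha n) p) (hw n)) ?_
  calc _ ≤ p / (p - 1) * ∑ n ∈ Icc 1 m, a n * weightedMean a w n ^ (p - 1) * w n := by
        rw [div_mul_eq_mul_div, le_div_iff₀' hpq.sub_one_pos]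
        exact sub_one_mul_sum_rpow_weightedMean_le hp ha hw m
    _ ≤ _ := by gcongr

/-- Finite weighted discrete Hardy inequality (Broadbent-style). -/
theorem finite_weighted_hardy (m : ℕ) (p : ℝ) (hp : 1 < p) (a w : ℕ → ℝ)
    (ha : ∀ i, 0 ≤ a i) (hw : ∀ i, 0 ≤ w i) (hw1 : 0 < w 1) :
    ∑ n ∈ Finset.Icc 1 m,
        ((∑ i ∈ Finset.Icc 1 n, a i * w i) / (∑ i ∈ Finset.Icc 1 n, w i)) ^ p * w n
      ≤ (p / (p - 1)) ^ p * ∑ n ∈ Finset.Icc 1 m, a n ^ p * w n :=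
  finite_weighted_hardy_general m p hp a w ha hw
end

section
/- Let $\mu$ be the Bernoulli distribution on $\{0,1\}$ with $\mu(\{1\})=q\in[0,1]$, and fix $p>1$ and nonnegative reals $a,b$. Then $(1-q)a^p + q((1-q)a+qb)^p \le (1+q)\big((1-q)a^p + q b^p\big)$. -/
/-- For the Bernoulli distribution with success probability `q`, the Hardy
functional is bounded by `(1+q)` times the `L_p`-mass: with `ψ(0) = a`,
`ψ(1) = b` this is the elementary convexity inequality. -/
theorem bernoulli_hardy_bound (p q a b : ℝ) (hp : 1 < p)
    (hq0 : 0 ≤ q) (hq1 : q ≤ 1) (ha : 0 ≤ a) (hb : 0 ≤ b) :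
    (1 - q) * a ^ p + q * ((1 - q) * a + q * b) ^ p
      ≤ (1 + q) * ((1 - q) * a ^ p + q * b ^ p) := by
  have hconv : ((1 - q) * a + q * b) ^ p ≤ (1 - q) * a ^ p + q * b ^ p := by
    have := (convexOn_rpow hp.le).2 (Set.mem_Ici.mpr ha) (Set.mem_Ici.mpr hb)
      (show (0:ℝ) ≤ 1 - q by linarith) hq0 (by ring)
    simpa [smul_eq_mul] using this
  have hap : 0 ≤ a ^ p := Real.rpow_nonneg ha p
  have hbp : 0 ≤ b ^ p := Real.rpow_nonneg hb p
  nlinarith [mul_le_mul_of_nonneg_left hconv hq0]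
end

section
/- Let $q\in(0,1)$ with $q > 1/\big(1+(1-1/p)^p\big)$ for some $p>1$. Let $X,Y$ be i.i.d. Bernoulli with $P(X=1)=q$, $F$ their distribution function, and $\psi(0)=1$, $\psi(1)=0$. Then $E\big[\big(E(\psi(Y)1_{[Y<X]}\mid X)/F(X-)\big)^p\big] = q > \left(\frac{p}{p-1}\right)^p(1-q) = \left(\frac{p}{p-1}\right)^p E[\psi(Y)^p]$, with the convention $0/0=0$. Hence Hardy's inequality fails when $(1_{[Y\le X]},F(X))$ is replaced by $(1_{[Y<X]},F(X-))$. -/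
open MeasureTheory Set ENNReal

/-!
Under the two-point law `a δ₀ + b δ₁` nothing lies strictly below `0`, so the left average at `0`
is `0 / 0 = 0`, while below `1` there is only the atom at `0`, where `ψ = 1`, so the left average
at `1` is `1`. Hence the left-hand side is `b = q`, whereas `∫ ψ ^ p = a = 1 - q`, and the
assumption on `q` is exactly `(p / (p - 1)) ^ p (1 - q) < q`.
-/

/-- The left-limit analogue `E(ψ(Y) 1_{[Y < X]} | X = x) / F(x-)` of Hardy's average. -/
noncomputable def leftAverage {α : Type*} [MeasurableSpace α] [Preorder α]
    (μ : Measure α) (ψ : α → ℝ≥0∞) (x : α) : ℝ≥0∞ :=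
  (∫⁻ y in Iio x, ψ y ∂μ) / μ (Iio x)

section TwoPoint

variable {α : Type*} [MeasurableSpace α] [MeasurableSingletonClass α] (a b : ℝ≥0∞) (x y : α)

theorem lintegral_twoPoint (f : α → ℝ≥0∞) :
    ∫⁻ z, f z ∂(a • Measure.dirac x + b • Measure.dirac y) = a * f x + b * f y := by
  simp only [lintegral_add_measure, lintegral_smul_measure, lintegral_dirac, smul_eq_mul]

variable [LinearOrder α] {x y}

theorem leftAverage_twoPoint_left (ψ : α → ℝ≥0∞) (hxy : x < y) :
    leftAverage (a • Measure.dirac x + b • Measure.dirac y) ψ x = 0 := by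
  have hIio : (a • Measure.dirac x + b • Measure.dirac y) (Iio x) = 0 := by
    simp [Measure.dirac_apply, hxy.not_gt]
  rw [leftAverage, hIio, Measure.restrict_eq_zero.mpr hIio, lintegral_zero_measure,
    ENNReal.zero_div]

theorem leftAverage_twoPoint_right (ψ : α → ℝ≥0∞) (hxy : x < y) (ha0 : a ≠ 0) (ha : a ≠ ∞)
    (hψx : ψ x = 1) :
    leftAverage (a • Measure.dirac x + b • Measure.dirac y) ψ y = 1 := by
  have hIio : (a • Measure.dirac x + b • Measure.dirac y) (Iio y) = a := by
    simp [Measure.dirac_apply, hxy]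
  have hint : ∫⁻ z in Iio y, ψ z ∂(a • Measure.dirac x + b • Measure.dirac y) = a := by
    simp [Measure.restrict_add, Measure.restrict_smul, setLIntegral_dirac, hxy, hψx]
  rw [leftAverage, hIio, hint, ENNReal.div_self ha0 ha]

theorem lintegral_leftAverage_rpow_twoPoint (ψ : α → ℝ≥0∞) (hxy : x < y) (ha0 : a ≠ 0)
    (ha : a ≠ ∞) (hψx : ψ x = 1) {p : ℝ} (hp : 0 < p) :
    ∫⁻ z, leftAverage (a • Measure.dirac x + b • Measure.dirac y) ψ z ^ p
      ∂(a • Measure.dirac x + b • Measure.dirac y) = b := by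
  rw [lintegral_twoPoint, leftAverage_twoPoint_left a b ψ hxy,
    leftAverage_twoPoint_right a b ψ hxy ha0 ha hψx, ENNReal.zero_rpow_of_pos hp,
    ENNReal.one_rpow, mul_zero, mul_one, zero_add]

end TwoPoint

theorem one_sub_one_div_rpow_self {p : ℝ} (hp : 1 < p) :
    (1 - 1 / p) ^ p = ((p / (p - 1)) ^ p)⁻¹ := by
  have hp0 : 0 < p := zero_lt_one.trans hp
  have hp1 : 0 < p - 1 := sub_pos.mpr hp
  rw [← Real.inv_rpow (div_pos hp0 hp1).le, inv_div]
  congr 1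
  field_simp

theorem hardy_constant_mul_one_sub_lt {p q : ℝ} (hp : 1 < p)
    (hq : 1 / (1 + (1 - 1 / p) ^ p) < q) :
    (p / (p - 1)) ^ p * (1 - q) < q := by
  set c := (p / (p - 1)) ^ p
  have hc : 0 < c := Real.rpow_pos_of_pos (div_pos (zero_lt_one.trans hp) (sub_pos.mpr hp)) p
  rw [one_sub_one_div_rpow_self hp, div_lt_iff₀ (by positivity)] at hq
  calc c * (1 - q) < c * (q * c⁻¹) := by gcongr; linarith
    _ = q := by field_simp

theorem hardy_left_limit_counterexample_general (p q : ℝ) (hp : 1 < p)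
    (hq : 1 / (1 + (1 - 1 / p) ^ p) < q) (hq1 : q < 1)
    (μ : Measure ℝ)
    (hμ : μ = ENNReal.ofReal (1 - q) • Measure.dirac 0
            + ENNReal.ofReal q • Measure.dirac 1)
    (ψ : ℝ → ℝ≥0∞) (hψ0 : ψ 0 = 1) (hψ1 : ψ 1 = 0) :
    (∫⁻ x, ((∫⁻ y in Iio x, ψ y ∂μ) / μ (Iio x)) ^ p ∂μ = ENNReal.ofReal q)
    ∧ ENNReal.ofReal ((p / (p - 1)) ^ p) * (∫⁻ y, ψ y ^ p ∂μ)
        < ENNReal.ofReal q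
    ∧ (∫⁻ y, ψ y ^ p ∂μ) = ENNReal.ofReal (1 - q) := by
  subst hμ
  have hp0 : 0 < p := zero_lt_one.trans hp
  have hhardy := hardy_constant_mul_one_sub_lt hp hq
  have hq0 : 0 < q := (mul_nonneg (by positivity) (by linarith)).trans_lt hhardy
  have hmass : ENNReal.ofReal (1 - q) ≠ 0 := ENNReal.ofReal_ne_zero_iff.mpr (by linarith)
  have hψp : ∫⁻ y, ψ y ^ p ∂(ENNReal.ofReal (1 - q) • Measure.dirac 0
      + ENNReal.ofReal q • Measure.dirac 1) = ENNReal.ofReal (1 - q) := by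
    rw [lintegral_twoPoint, hψ0, hψ1, ENNReal.one_rpow, ENNReal.zero_rpow_of_pos hp0, mul_one,
      mul_zero, add_zero]
  refine ⟨lintegral_leftAverage_rpow_twoPoint _ _ ψ zero_lt_one hmass ofReal_ne_top hψ0 hp0,
    ?_, hψp⟩
  rw [hψp, ← ENNReal.ofReal_mul (by positivity), ENNReal.ofReal_lt_ofReal_iff hq0]
  exact hhardy

/-- Counterexample: for Bernoulli distributions with large success probability
`q`, the variant of Hardy's inequality with `(1_{[Y < X]}, F(X-))` in place of
`(1_{[Y ≤ X]}, F(X))` fails (with the convention `0/0 = 0`). -/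
theorem hardy_left_limit_counterexample (p q : ℝ) (hp : 1 < p)
    (hq : 1 / (1 + (1 - 1 / p) ^ p) < q) (hq1 : q < 1)
    (μ : Measure ℝ)
    (hμ : μ = ENNReal.ofReal (1 - q) • Measure.dirac 0
            + ENNReal.ofReal q • Measure.dirac 1)
    (ψ : ℝ → ℝ≥0∞) (hψ : Measurable ψ) (hψ0 : ψ 0 = 1) (hψ1 : ψ 1 = 0) :
    (∫⁻ x, ((∫⁻ y in Iio x, ψ y ∂μ) / μ (Iio x)) ^ p ∂μ = ENNReal.ofReal q)
    ∧ ENNReal.ofReal ((p / (p - 1)) ^ p) * (∫⁻ y, ψ y ^ p ∂μ)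
        < ENNReal.ofReal q
    ∧ (∫⁻ y, ψ y ^ p ∂μ) = ENNReal.ofReal (1 - q) :=
  hardy_left_limit_counterexample_general p q hp hq hq1 μ hμ ψ hψ0 hψ1
end

section
/- Let $G$ be a distribution function of a probability measure on $\mathbb{R}$, $\chi\ge 0$ measurable, $0<\gamma<1$, and $x\in\mathbb{R}$. Then $\gamma \int_{(-\infty,x]} \chi(y)\left(\int_{(-\infty,y]}\chi\,dG\right)^{\gamma-1} dG(y) \le \left(\int_{(-\infty,x]}\chi\,dG\right)^{\gamma}$. -/
open MeasureTheory Set ENNReal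

/-!
Move everything to the finite measure `μ = χ • ν` on `(-∞, x]`, with distribution function
`F y = μ (-∞, y]`. Under `μ`, `F` is stochastically at least uniform: `μ {F ≤ s} ≤ s`, since by
inner regularity this lower set is exhausted by compact sets, each lying below its maximum. So
`μ {F ^ (γ - 1) > t} ≤ min (t ^ (γ - 1)⁻¹) (μ univ)`, and the layer-cake formula bounds
`∫ F ^ (γ - 1) dμ` by `∫₀^∞ min (t ^ (γ - 1)⁻¹) (μ univ) dt = μ univ ^ γ / γ`, which is
`∫₀^{μ univ} s ^ (γ - 1) ds`.
-/

theorem ENNReal.rpow_le_rpow_of_nonpos {x y : ℝ≥0∞} {z : ℝ} (hz : z ≤ 0) (hxy : x ≤ y) :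
    y ^ z ≤ x ^ z := by
  rw [← neg_neg z, rpow_neg y, rpow_neg x]
  exact ENNReal.inv_le_inv.2 (rpow_le_rpow hxy (neg_nonneg.2 hz))

theorem lintegral_Ioi_ofReal_rpow {a c : ℝ} (ha : a < -1) (hc : 0 < c) :
    ∫⁻ t in Ioi c, ENNReal.ofReal t ^ a = ENNReal.ofReal (-c ^ (a + 1) / (a + 1)) := by
  have hnonneg : 0 ≤ᵐ[volume.restrict (Ioi c)] fun t : ℝ => t ^ a := by
    filter_upwards [ae_restrict_mem measurableSet_Ioi] with t ht
    exact Real.rpow_nonneg (hc.trans ht).le a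
  rw [← integral_Ioi_rpow_of_lt ha hc,
    ofReal_integral_eq_lintegral_ofReal (integrableOn_Ioi_rpow_of_lt ha hc) hnonneg]
  exact setLIntegral_congr_fun measurableSet_Ioi fun t ht => ofReal_rpow_of_pos (hc.trans ht)

theorem lintegral_Ioi_min_rpow_le {γ M : ℝ} (hγ0 : 0 < γ) (hγ1 : γ < 1) (hM : 0 < M) :
    ∫⁻ t in Ioi 0, min (ENNReal.ofReal t ^ (γ - 1)⁻¹) (ENNReal.ofReal M)
      ≤ ENNReal.ofReal (M ^ γ / γ) := by
  set c := M ^ (γ - 1)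
  have hc : 0 < c := Real.rpow_pos_of_pos hM _
  have hγ1' : γ - 1 < 0 := by linarith
  have hβ : (γ - 1)⁻¹ < -1 := by
    rw [inv_eq_one_div, div_lt_iff_of_neg hγ1']; linarith
  have hβ1 : (γ - 1)⁻¹ + 1 = γ / (γ - 1) := by field_simp [hγ1'.ne]; ring
  have hcM : c * M = M ^ γ := by
    rw [← Real.rpow_add_one hM.ne']; ring_nf
  have hcβ : c ^ ((γ - 1)⁻¹ + 1) = M ^ γ := by
    rw [← Real.rpow_mul hM.le, hβ1, mul_div_cancel₀ _ hγ1'.ne]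
  calc _ ≤ (∫⁻ _ in Ioc 0 c, ENNReal.ofReal M)
        + ∫⁻ t in Ioi c, ENNReal.ofReal t ^ (γ - 1)⁻¹ := by
        rw [← Ioc_union_Ioi_eq_Ioi hc.le]
        exact (lintegral_union_le _ _ _).trans <| add_le_add
          (setLIntegral_mono' measurableSet_Ioc fun _ _ => min_le_right _ _)
          (setLIntegral_mono' measurableSet_Ioi fun _ _ => min_le_left _ _)
    _ = ENNReal.ofReal (M ^ γ / γ) := by
        have hMγ : 0 < M ^ γ := Real.rpow_pos_of_pos hM γ
        rw [setLIntegral_const, Real.volume_Ioc, sub_zero, ← ofReal_mul hM.le, mul_comm, hcM,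
          lintegral_Ioi_ofReal_rpow hβ hc, hcβ, hβ1, ← ofReal_add hMγ.le]
        · congr 1; field_simp; ring
        · exact div_nonneg_of_nonpos (neg_nonpos.2 hMγ.le) (div_neg_of_pos_of_neg hγ0 hγ1').le

section LinearOrder

variable {α : Type*} [LinearOrder α] [TopologicalSpace α] [OrderClosedTopology α]
  [MeasurableSpace α] [BorelSpace α]

theorem measure_setOf_measure_Iic_le (μ : Measure α) [μ.InnerRegular] (s : ℝ≥0∞) :
    μ {y | μ (Iic y) ≤ s} ≤ s := by
  have hlower : IsLowerSet {y | μ (Iic y) ≤ s} := fun a b hba ha =>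
    (measure_mono (Iic_subset_Iic.2 hba)).trans ha
  rw [hlower.ordConnected.measurableSet.measure_eq_iSup_isCompact]
  refine iSup₂_le fun K hK => iSup_le fun hKc => ?_
  rcases K.eq_empty_or_nonempty with rfl | hne
  · simp
  obtain ⟨k, hkK, hk⟩ := hKc.exists_isGreatest hne
  exact (measure_mono fun y hy => hk hy).trans (hK hkK)

theorem measure_setOf_lt_measure_Iic_rpow_le (μ : Measure α) [μ.InnerRegular] {p : ℝ}
    (hp : p < 0) (t : ℝ≥0∞) : μ {y | t < μ (Iic y) ^ p} ≤ t ^ p⁻¹ := by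
  refine (measure_mono fun y (hy : t < _) => ?_).trans (measure_setOf_measure_Iic_le μ _)
  calc μ (Iic y) = (μ (Iic y) ^ p) ^ p⁻¹ := by rw [← rpow_mul, mul_inv_cancel₀ hp.ne, rpow_one]
    _ ≤ t ^ p⁻¹ := rpow_le_rpow_of_nonpos (inv_nonpos.2 hp.le) hy.le

theorem measurable_measure_Iic (μ : Measure α) : Measurable fun y => μ (Iic y) :=
  Monotone.measurable fun _ _ hab => measure_mono (Iic_subset_Iic.2 hab)

theorem ofReal_mul_lintegral_measure_Iic_rpow_le (μ : Measure α) [IsFiniteMeasure μ]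
    [μ.InnerRegular] {γ : ℝ} (hγ0 : 0 < γ) (hγ1 : γ < 1) :
    ENNReal.ofReal γ * ∫⁻ y, μ (Iic y) ^ (γ - 1) ∂μ ≤ μ univ ^ γ := by
  rcases eq_zero_or_neZero μ with rfl | _
  · simp
  set M := (μ univ).toReal
  have hM : 0 < M := toReal_pos (NeZero.ne _) (measure_ne_top _ _)
  have hγ1' : γ - 1 < 0 := by linarith
  set g := fun y => μ (Iic y) ^ (γ - 1)
  have hg : Measurable g := (measurable_measure_Iic μ).pow_const _
  -- `g y = 0 ^ (γ - 1) = ∞` where `μ (Iic y) = 0`, but that set is `μ`-null.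
  have hg_fin : ∀ᵐ y ∂μ, g y ≠ ∞ := by
    refine measure_mono_null (fun y hy => ?_)
      (nonpos_iff_eq_zero.1 (measure_setOf_measure_Iic_le μ 0))
    rcases rpow_eq_top_iff.1 (not_not.1 hy) with ⟨h0, -⟩ | ⟨-, hpos⟩
    · exact h0.le
    · linarith
  have hlevel : ∀ t ∈ Ioi (0 : ℝ), μ {y | t < (g y).toReal}
      ≤ min (ENNReal.ofReal t ^ (γ - 1)⁻¹) (ENNReal.ofReal M) := by
    intro t ht
    refine le_min ((measure_mono fun y hy => ?_).trans
      (measure_setOf_lt_measure_Iic_rpow_le μ hγ1' _)) ?_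
    · exact ((ofReal_lt_ofReal_iff_of_nonneg (le_of_lt ht)).2 hy).trans_le ofReal_toReal_le
    · rw [ofReal_toReal (measure_ne_top _ _)]
      exact measure_mono (subset_univ _)
  calc ENNReal.ofReal γ * ∫⁻ y, g y ∂μ
      = ENNReal.ofReal γ * ∫⁻ t in Ioi 0, μ {y | t < (g y).toReal} := by
        rw [← lintegral_eq_lintegral_meas_lt μ (ae_of_all _ fun _ => toReal_nonneg)
          hg.ennreal_toReal.aemeasurable]
        congr 1
        exact lintegral_congr_ae (hg_fin.mono fun y hy => (ofReal_toReal hy).symm)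
    _ ≤ ENNReal.ofReal γ * ENNReal.ofReal (M ^ γ / γ) := by
        gcongr
        exact (setLIntegral_mono' measurableSet_Ioi hlevel).trans
          (lintegral_Ioi_min_rpow_le hγ0 hγ1 hM)
    _ = μ univ ^ γ := by
        rw [← ofReal_mul hγ0.le, mul_div_cancel₀ _ hγ0.ne', ← ofReal_rpow_of_pos hM,
          ofReal_toReal (measure_ne_top _ _)]

end LinearOrder

theorem power_integration_lemma_general (ν : Measure ℝ)
    (χ : ℝ → ℝ≥0∞) (hχ : Measurable χ) (γ : ℝ) (hγ0 : 0 < γ) (hγ1 : γ < 1)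
    (x : ℝ) :
    ENNReal.ofReal γ *
        ∫⁻ y in Iic x, χ y * (∫⁻ z in Iic y, χ z ∂ν) ^ (γ - 1) ∂ν
      ≤ (∫⁻ y in Iic x, χ y ∂ν) ^ γ := by
  rcases eq_top_or_lt_top (∫⁻ y in Iic x, χ y ∂ν) with htop | hfin
  · rw [htop, top_rpow_of_pos hγ0]
    exact le_top
  set μ := (ν.restrict (Iic x)).withDensity χ
  have : IsFiniteMeasure μ := isFiniteMeasure_withDensity hfin.ne
  have hμ_Iic : ∀ y ≤ x, μ (Iic y) = ∫⁻ z in Iic y, χ z ∂ν := fun y hy => by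
    rw [withDensity_apply _ measurableSet_Iic, Measure.restrict_restrict measurableSet_Iic,
      inter_eq_left.2 (Iic_subset_Iic.2 hy)]
  have hμ_univ : μ univ = ∫⁻ y in Iic x, χ y ∂ν := by
    rw [withDensity_apply _ MeasurableSet.univ, Measure.restrict_univ]
  have hlhs : ∫⁻ y in Iic x, χ y * (∫⁻ z in Iic y, χ z ∂ν) ^ (γ - 1) ∂ν
      = ∫⁻ y, μ (Iic y) ^ (γ - 1) ∂μ := by
    rw [lintegral_withDensity_eq_lintegral_mul _ hχ ((measurable_measure_Iic μ).pow_const _)]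
    exact setLIntegral_congr_fun measurableSet_Iic fun y hy => by
      rw [Pi.mul_apply, hμ_Iic y hy]
  rw [hlhs, ← hμ_univ]
  exact ofReal_mul_lintegral_measure_Iic_rpow_le μ hγ0 hγ1

/-- Power-integration lemma for the increasing function
`y ↦ ∫_{(-∞,y]} χ dG`, valid for arbitrary (possibly atomic) distributions. -/
theorem power_integration_lemma (ν : Measure ℝ) [IsProbabilityMeasure ν]
    (χ : ℝ → ℝ≥0∞) (hχ : Measurable χ) (γ : ℝ) (hγ0 : 0 < γ) (hγ1 : γ < 1)
    (x : ℝ) :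
    ENNReal.ofReal γ *
        ∫⁻ y in Iic x, χ y * (∫⁻ z in Iic y, χ z ∂ν) ^ (γ - 1) ∂ν
      ≤ (∫⁻ y in Iic x, χ y ∂ν) ^ γ :=
  power_integration_lemma_general ν χ hχ γ hγ0 hγ1 x
end

section
/- Let $X,Y$ be independent with distribution functions $F,G$, suppose $P(X=Y)=0$, $F(x)\le G(x)$ for all $x$, and $p>1$. Then for every measurable $\psi\ge 0$, $E\left[\left(\frac{E(\psi(Y)1_{[Y\le X]}\mid X)}{G(X)}\right)^p\right] \le \left(\frac{p}{p-1}\right)^p E[\psi(Y)^p]$. -/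
/-!
Let `M x = ⨆ y ≥ x, (∫⁻ z in Iic y, ψ z ∂ν) / ν (Iic y)` be the one-sided maximal function of
`ψ`. The integrand is at most `M ^ p`, which is antitone. Since `F ≤ G`, the law `μ` of `X`
stochastically dominates the law `ν` of `Y`, and an antitone function has a smaller integral
under the larger law: by the layer-cake formula this reduces to comparing `μ` and `ν` on lower
sets, which are exhausted by half-lines `Iic x`. Every point of the lower set `{M > t}` lies in
a half-line `Iic y ⊆ {M > t}` on which the `ν`-average of `ψ` exceeds `t`, which gives the
weak-type bound `t ν {M > t} ≤ ∫_{M > t} ψ dν`. Doob's argument (layer cake, Tonelli, Hölder)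
upgrades it to `∫ M ^ p dν ≤ (p / (p - 1)) ^ p ∫ ψ ^ p dν`.
-/

open MeasureTheory Set ENNReal

theorem IsLowerSet.measure_eq_iSup_measure_Iic (μ : Measure ℝ) {s : Set ℝ} (hs : IsLowerSet s) :
    μ s = ⨆ x ∈ s, μ (Iic x) := by
  refine le_antisymm ?_ (iSup₂_le fun x hx => measure_mono (hs.Iic_subset hx))
  by_cases hmax : ∃ c ∈ s, ∀ y ∈ s, y ≤ c
  · obtain ⟨c, hc, hmax⟩ := hmax
    exact le_iSup₂_of_le c hc (measure_mono hmax)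
  push Not at hmax
  -- without a greatest element, the rational points of `s` are cofinal in `s`
  set t := s ∩ range ((↑) : ℚ → ℝ)
  have hst : s = ⋃ x ∈ t, Iic x := by
    refine Subset.antisymm (fun x hx => ?_) (iUnion₂_subset fun x hx => hs.Iic_subset hx.1)
    obtain ⟨y, hy, hxy⟩ := hmax x hx
    obtain ⟨q, hxq, hqy⟩ := exists_rat_btwn hxy
    exact mem_biUnion ⟨hs hqy.le hy, q, rfl⟩ hxq.le
  have hdir : DirectedOn (Function.onFun (· ⊆ ·) Iic) t := fun x hx y hy =>
    (le_total x y).elim (fun h => ⟨y, hy, Iic_subset_Iic.2 h, subset_rfl⟩)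
      (fun h => ⟨x, hx, subset_rfl, Iic_subset_Iic.2 h⟩)
  calc μ s = ⨆ x ∈ t, μ (Iic x) := by
        rw [hst, measure_biUnion_eq_iSup ((countable_range _).mono inter_subset_right) hdir]
    _ ≤ ⨆ x ∈ s, μ (Iic x) := biSup_mono fun x hx => hx.1

theorem setLIntegral_Ioo_ofReal_rpow {b s : ℝ} (hb : 0 ≤ b) (hs : 0 < s) :
    ∫⁻ t in Ioo 0 b, ENNReal.ofReal (t ^ (s - 1)) = ENNReal.ofReal (b ^ s / s) := by
  have hint : IntegrableOn (fun t : ℝ => t ^ (s - 1)) (Ioc 0 b) := by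
    simpa [intervalIntegrable_iff, uIoc_of_le hb] using
      intervalIntegral.intervalIntegrable_rpow' (a := 0) (b := b) (by linarith : -1 < s - 1)
  have hnn : 0 ≤ᵐ[volume.restrict (Ioc 0 b)] fun t : ℝ => t ^ (s - 1) := by
    filter_upwards [self_mem_ae_restrict measurableSet_Ioc] with t ht
    exact Real.rpow_nonneg ht.1.le _
  rw [setLIntegral_congr Ioo_ae_eq_Ioc, ← ofReal_integral_eq_lintegral_ofReal hint hnn,
    ← intervalIntegral.integral_of_le hb, integral_rpow (Or.inl (by linarith)),
    sub_add_cancel, Real.zero_rpow hs.ne', sub_zero]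

theorem ENNReal.rpow_eq_ofReal_mul_lintegral_Ioi (a : ℝ≥0∞) {s : ℝ} (hs : 0 < s) :
    a ^ s = ENNReal.ofReal s * ∫⁻ t in Ioi 0,
      {t : ℝ | ENNReal.ofReal t < a}.indicator (fun t => ENNReal.ofReal (t ^ (s - 1))) t := by
  have hmeas : MeasurableSet {t : ℝ | ENNReal.ofReal t < a} := measurable_ofReal measurableSet_Iio
  rw [lintegral_indicator hmeas, Measure.restrict_restrict hmeas]
  rcases eq_or_ne a ⊤ with rfl | ha
  · have hInf : ∫⁻ t in Ioi 0, ENNReal.ofReal (t ^ (s - 1)) = ⊤ := by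
      by_contra h
      refine not_integrableOn_Ioi_rpow (s - 1) ((lintegral_ofReal_ne_top_iff_integrable ?_ ?_).1 h)
      · exact (measurable_id.pow_const _).aestronglyMeasurable
      · filter_upwards [self_mem_ae_restrict measurableSet_Ioi] with t ht
        exact Real.rpow_nonneg (le_of_lt ht) _
    simp [hInf, top_rpow_of_pos hs, hs]
  · have hset : {t : ℝ | ENNReal.ofReal t < a} ∩ Ioi 0 = Ioo 0 a.toReal := by
      ext t
      simp only [mem_inter_iff, mem_ofPred_eq, mem_Ioi, mem_Ioo]
      exact ⟨fun h => ⟨h.2, (ofReal_lt_iff_lt_toReal h.2.le ha).1 h.1⟩,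
        fun h => ⟨(ofReal_lt_iff_lt_toReal h.1.le ha).2 h.2, h.1⟩⟩
    rw [hset, setLIntegral_Ioo_ofReal_rpow toReal_nonneg hs, ← ofReal_mul hs.le,
      mul_div_cancel₀ _ hs.ne', ← ofReal_rpow_of_nonneg toReal_nonneg hs.le, ofReal_toReal ha]

theorem lintegral_mul_rpow_eq_lintegral_Ioi {α : Type*} [MeasurableSpace α] (μ : Measure α)
    [SFinite μ] {f g : α → ℝ≥0∞} (hf : Measurable f) (hg : Measurable g) {s : ℝ} (hs : 0 < s) :
    ∫⁻ x, g x * f x ^ s ∂μ = ENNReal.ofReal s * ∫⁻ t in Ioi 0,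
      ENNReal.ofReal (t ^ (s - 1)) * ∫⁻ x in {x | ENNReal.ofReal t < f x}, g x ∂μ := by
  have hpow : Measurable fun t : ℝ => ENNReal.ofReal (t ^ (s - 1)) :=
    (measurable_id.pow_const _).ennreal_ofReal
  set K : α → ℝ → ℝ≥0∞ := fun x t =>
    if ENNReal.ofReal t < f x then g x * ENNReal.ofReal (t ^ (s - 1)) else 0
  have hK : Measurable (Function.uncurry K) :=
    .ite (measurableSet_lt (measurable_ofReal.comp measurable_snd) (hf.comp measurable_fst))
      ((hg.comp measurable_fst).mul (hpow.comp measurable_snd)) measurable_const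
  have hx : ∀ x, g x * f x ^ s = ENNReal.ofReal s * ∫⁻ t in Ioi 0, K x t := by
    intro x
    have hE : MeasurableSet {t : ℝ | ENNReal.ofReal t < f x} :=
      measurableSet_lt measurable_ofReal measurable_const
    rw [rpow_eq_ofReal_mul_lintegral_Ioi _ hs, mul_left_comm,
      ← lintegral_const_mul _ (hpow.indicator hE)]
    congr 2 with t
    by_cases h : ENNReal.ofReal t < f x <;> simp [K, h]
  have ht : ∀ t, ∫⁻ x, K x t ∂μ =
      ENNReal.ofReal (t ^ (s - 1)) * ∫⁻ x in {x | ENNReal.ofReal t < f x}, g x ∂μ := by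
    intro t
    have hE : MeasurableSet {x | ENNReal.ofReal t < f x} := measurableSet_lt measurable_const hf
    rw [← lintegral_indicator hE, ← lintegral_const_mul _ (hg.indicator hE)]
    congr 1 with x
    by_cases h : ENNReal.ofReal t < f x <;> simp [K, h, mul_comm]
  calc ∫⁻ x, g x * f x ^ s ∂μ = ENNReal.ofReal s * ∫⁻ x, (∫⁻ t in Ioi 0, K x t) ∂μ := by
        simp_rw [hx]; exact lintegral_const_mul _ hK.lintegral_prod_right'
    _ = _ := by rw [lintegral_lintegral_swap hK.aemeasurable]; simp_rw [ht]

theorem lintegral_le_lintegral_of_antitone {μ ν : Measure ℝ} [SFinite μ] [SFinite ν]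
    (hμν : ∀ x, μ (Iic x) ≤ ν (Iic x)) {φ : ℝ → ℝ≥0∞} (hφ : Antitone φ) :
    ∫⁻ x, φ x ∂μ ≤ ∫⁻ x, φ x ∂ν := by
  have layercake (m : Measure ℝ) [SFinite m] :
      ∫⁻ x, φ x ∂m = ∫⁻ t in Ioi 0, m {x | ENNReal.ofReal t < φ x} := by
    simpa using lintegral_mul_rpow_eq_lintegral_Ioi m hφ.measurable measurable_one one_pos
  rw [layercake μ, layercake ν]
  refine lintegral_mono fun t => ?_
  have hE : IsLowerSet {x | ENNReal.ofReal t < φ x} := fun a b hba ha => ha.trans_le (hφ hba)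
  rw [hE.measure_eq_iSup_measure_Iic, hE.measure_eq_iSup_measure_Iic]
  exact iSup₂_mono fun x _ => hμν x

theorem ENNReal.le_rpow_of_le_mul_rpow {a b : ℝ≥0∞} {p q : ℝ} (hpq : p.HolderConjugate q)
    (ha : a ≠ ⊤) (h : a ≤ b * a ^ (1 / q)) : a ≤ b ^ p := by
  rcases eq_or_ne a 0 with rfl | ha0
  · exact zero_le
  have haq0 : a ^ (1 / q) ≠ 0 := (rpow_pos (pos_iff_ne_zero.2 ha0) ha).ne'
  have haq : a ^ (1 / q) ≠ ⊤ := rpow_ne_top_of_nonneg hpq.symm.one_div_nonneg ha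
  have hap : a ^ (1 / p) ≤ b := by
    rwa [← ENNReal.mul_le_mul_iff_left haq0 haq, ← rpow_add _ _ ha0 ha,
      hpq.one_div_add_one_div, div_one, rpow_one]
  calc a = (a ^ (1 / p)) ^ p := by rw [← rpow_mul, one_div_mul_cancel hpq.ne_zero, rpow_one]
    _ ≤ b ^ p := rpow_le_rpow hap hpq.nonneg

section WeakType

variable {α : Type*} [MeasurableSpace α] {μ : Measure α} {f g : α → ℝ≥0∞} {p : ℝ}

theorem lintegral_rpow_le_lintegral_mul_rpow_of_weakType [SFinite μ] (hf : Measurable f)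
    (hg : Measurable g) (hp : 1 < p)
    (hfg : ∀ t : ℝ≥0∞, t * μ {x | t < f x} ≤ ∫⁻ x in {x | t < f x}, g x ∂μ) :
    ∫⁻ x, f x ^ p ∂μ ≤ ENNReal.ofReal (p / (p - 1)) * ∫⁻ x, g x * f x ^ (p - 1) ∂μ := by
  have hp1 : 0 < p - 1 := sub_pos.2 hp
  calc ∫⁻ x, f x ^ p ∂μ
      = ENNReal.ofReal p * ∫⁻ t in Ioi 0,
          ENNReal.ofReal (t ^ (p - 1)) * μ {x | ENNReal.ofReal t < f x} := by
        simpa using lintegral_mul_rpow_eq_lintegral_Ioi μ hf measurable_one (by linarith : 0 < p)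
    _ ≤ ENNReal.ofReal p * ∫⁻ t in Ioi 0,
          ENNReal.ofReal (t ^ (p - 1 - 1)) * ∫⁻ x in {x | ENNReal.ofReal t < f x}, g x ∂μ := by
        gcongr 1
        refine setLIntegral_mono' measurableSet_Ioi fun t (ht : 0 < t) => ?_
        rw [← sub_add_cancel (p - 1) 1, Real.rpow_add_one ht.ne', ofReal_mul (by positivity),
          sub_add_cancel, mul_assoc]
        gcongr
        exact hfg _
    _ = ENNReal.ofReal (p / (p - 1)) * ∫⁻ x, g x * f x ^ (p - 1) ∂μ := by
        rw [lintegral_mul_rpow_eq_lintegral_Ioi μ hf hg hp1, ← mul_assoc,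
          ← ofReal_mul (by positivity), div_mul_cancel₀ _ hp1.ne']

theorem lintegral_rpow_le_of_weakType_of_ne_top [SFinite μ] (hf : Measurable f)
    (hg : Measurable g) (hp : 1 < p)
    (hfg : ∀ t : ℝ≥0∞, t * μ {x | t < f x} ≤ ∫⁻ x in {x | t < f x}, g x ∂μ)
    (hfp : ∫⁻ x, f x ^ p ∂μ ≠ ⊤) :
    ∫⁻ x, f x ^ p ∂μ ≤ ENNReal.ofReal ((p / (p - 1)) ^ p) * ∫⁻ x, g x ^ p ∂μ := by
  have hpq := Real.HolderConjugate.conjExponent hp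
  have hq : 0 ≤ p / (p - 1) := hpq.symm.nonneg
  have holder : ∫⁻ x, g x * f x ^ (p - 1) ∂μ
      ≤ (∫⁻ x, g x ^ p ∂μ) ^ (1 / p) * (∫⁻ x, f x ^ p ∂μ) ^ (1 / p.conjExponent) := by
    have hfq (x : α) : (f x ^ (p - 1)) ^ p.conjExponent = f x ^ p := by
      rw [← rpow_mul, hpq.sub_one_mul_conj]
    simpa only [Pi.mul_apply, hfq] using
      lintegral_mul_le_Lp_mul_Lq μ hpq hg.aemeasurable (hf.pow_const (p - 1)).aemeasurable
  have key := (lintegral_rpow_le_lintegral_mul_rpow_of_weakType hf hg hp hfg).trans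
    (mul_le_mul_right holder _)
  rw [← mul_assoc] at key
  calc ∫⁻ x, f x ^ p ∂μ ≤ (ENNReal.ofReal (p / (p - 1)) * (∫⁻ x, g x ^ p ∂μ) ^ (1 / p)) ^ p :=
        le_rpow_of_le_mul_rpow hpq hfp key
    _ = ENNReal.ofReal ((p / (p - 1)) ^ p) * ∫⁻ x, g x ^ p ∂μ := by
        rw [mul_rpow_of_nonneg _ _ hpq.nonneg, ← rpow_mul, one_div_mul_cancel hpq.ne_zero,
          rpow_one, ofReal_rpow_of_nonneg hq hpq.nonneg]

theorem lintegral_rpow_le_of_weakType [IsFiniteMeasure μ] (hf : Measurable f)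
    (hg : Measurable g) (hp : 1 < p)
    (hfg : ∀ t : ℝ≥0∞, t * μ {x | t < f x} ≤ ∫⁻ x in {x | t < f x}, g x ∂μ) :
    ∫⁻ x, f x ^ p ∂μ ≤ ENNReal.ofReal ((p / (p - 1)) ^ p) * ∫⁻ x, g x ^ p ∂μ := by
  have hp0 : 0 < p := by linarith
  have htrunc (n : ℕ) : ∫⁻ x, min (f x) n ^ p ∂μ
      ≤ ENNReal.ofReal ((p / (p - 1)) ^ p) * ∫⁻ x, g x ^ p ∂μ := by
    refine lintegral_rpow_le_of_weakType_of_ne_top (hf.min measurable_const) hg hp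
      (fun t => ?_) ?_
    · rcases lt_or_ge t n with htn | htn
      · simpa [lt_min_iff, htn] using hfg t
      · have : {x | t < min (f x) n} = ∅ :=
          eq_empty_of_forall_notMem fun x hx => (hx.trans_le (min_le_right _ _)).not_ge htn
        rw [this]
        simp
    · refine ne_top_of_le_ne_top ?_ (lintegral_mono fun x => rpow_le_rpow (min_le_right _ _) hp0.le)
      simp [lintegral_const, mul_ne_top, rpow_ne_top_of_nonneg hp0.le, measure_ne_top]
  calc ∫⁻ x, f x ^ p ∂μ = ∫⁻ x, ⨆ n : ℕ, min (f x) n ^ p ∂μ := by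
        congr with x
        have hsup : f x = ⨆ n : ℕ, min (f x) n := by
          rw [← inf_iSup_eq, iSup_natCast, inf_top_eq]
        conv_lhs => rw [hsup]
        exact (orderIsoRpow p hp0).map_iSup _
    _ = ⨆ n : ℕ, ∫⁻ x, min (f x) n ^ p ∂μ :=
        lintegral_iSup (fun n => (hf.min measurable_const).pow_const _)
          fun m n hmn x => rpow_le_rpow (min_le_min_left _ (by exact_mod_cast hmn)) hp0.le
    _ ≤ _ := iSup_le htrunc

end WeakType

noncomputable def iicMaximal (ν : Measure ℝ) (ψ : ℝ → ℝ≥0∞) (x : ℝ) : ℝ≥0∞ :=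
  ⨆ y ∈ Ici x, (∫⁻ z in Iic y, ψ z ∂ν) / ν (Iic y)

section Maximal

variable (ν : Measure ℝ) (ψ : ℝ → ℝ≥0∞)

theorem le_iicMaximal (x : ℝ) : (∫⁻ z in Iic x, ψ z ∂ν) / ν (Iic x) ≤ iicMaximal ν ψ x :=
  le_iSup₂ (f := fun y (_ : y ∈ Ici x) => (∫⁻ z in Iic y, ψ z ∂ν) / ν (Iic y)) x self_mem_Ici

theorem antitone_iicMaximal : Antitone (iicMaximal ν ψ) := fun _ _ hab =>
  biSup_mono fun _ hy => hab.trans hy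

theorem mul_measure_lt_iicMaximal_le (t : ℝ≥0∞) :
    t * ν {x | t < iicMaximal ν ψ x} ≤ ∫⁻ y in {x | t < iicMaximal ν ψ x}, ψ y ∂ν := by
  set E := {x | t < iicMaximal ν ψ x}
  have hE : IsLowerSet E := fun a b hba ha => ha.trans_le (antitone_iicMaximal ν ψ hba)
  rw [hE.measure_eq_iSup_measure_Iic, ENNReal.mul_iSup]
  refine iSup_le fun x => ?_
  rw [ENNReal.mul_iSup]
  refine iSup_le fun hx => ?_
  obtain ⟨y, hxy, hy⟩ := lt_biSup_iff.1 (show t < iicMaximal ν ψ x from hx)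
  have hyE : y ∈ E := hy.trans_le (le_iicMaximal ν ψ y)
  calc t * ν (Iic x) ≤ t * ν (Iic y) := by gcongr; exact hxy
    _ ≤ ∫⁻ z in Iic y, ψ z ∂ν := mul_le_of_le_div hy.le
    _ ≤ ∫⁻ z in E, ψ z ∂ν := lintegral_mono_set (hE.Iic_subset hyE)

end Maximal

/-- `X ∼ μ` and `Y ∼ ν` are independent, so `E(ψ(Y) 1_{Y ≤ X} | X)` is
`∫⁻ y in Iic X, ψ y ∂ν`; when `G(X) = ν (Iic X) = 0` the ratio is `0 / 0 = 0` in `ℝ≥0∞`. -/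
theorem hardy_stochastic_ordering_general (μ ν : Measure ℝ)
    [IsProbabilityMeasure μ] [IsProbabilityMeasure ν]
    (hFG : ∀ x : ℝ, μ (Iic x) ≤ ν (Iic x))
    (p : ℝ) (hp : 1 < p) (ψ : ℝ → ℝ≥0∞) (hψ : Measurable ψ) :
    ∫⁻ x, ((∫⁻ y in Iic x, ψ y ∂ν) / ν (Iic x)) ^ p ∂μ
      ≤ ENNReal.ofReal ((p / (p - 1)) ^ p) * ∫⁻ y, ψ y ^ p ∂ν := by
  have hp0 : 0 ≤ p := by linarith
  calc ∫⁻ x, ((∫⁻ y in Iic x, ψ y ∂ν) / ν (Iic x)) ^ p ∂μ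
      ≤ ∫⁻ x, iicMaximal ν ψ x ^ p ∂μ :=
        lintegral_mono fun x => rpow_le_rpow (le_iicMaximal ν ψ x) hp0
    _ ≤ ∫⁻ x, iicMaximal ν ψ x ^ p ∂ν :=
        lintegral_le_lintegral_of_antitone hFG fun _ _ hab =>
          rpow_le_rpow (antitone_iicMaximal ν ψ hab) hp0
    _ ≤ ENNReal.ofReal ((p / (p - 1)) ^ p) * ∫⁻ y, ψ y ^ p ∂ν :=
        lintegral_rpow_le_of_weakType (antitone_iicMaximal ν ψ).measurable hψ hp
          (mul_measure_lt_iicMaximal_le ν ψ)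

/-- Hardy-type inequality under stochastic ordering: `X ∼ μ`, `Y ∼ ν` are
independent with distribution functions `F`, `G`, `P(X = Y) = 0`, and
`F ≤ G` pointwise (i.e. `Y ⪯ X`). The ratio is `0` when `G(X) = 0`. -/
theorem hardy_stochastic_ordering (μ ν : Measure ℝ)
    [IsProbabilityMeasure μ] [IsProbabilityMeasure ν]
    (hne : (μ.prod ν) {z : ℝ × ℝ | z.1 = z.2} = 0)
    (hFG : ∀ x : ℝ, μ (Iic x) ≤ ν (Iic x))
    (p : ℝ) (hp : 1 < p) (ψ : ℝ → ℝ≥0∞) (hψ : Measurable ψ) :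
    ∫⁻ x, ((∫⁻ y in Iic x, ψ y ∂ν) / ν (Iic x)) ^ p ∂μ
      ≤ ENNReal.ofReal ((p / (p - 1)) ^ p) * ∫⁻ y, ψ y ^ p ∂ν :=
  hardy_stochastic_ordering_general μ ν hFG p hp ψ hψ
end

section
/- Let $\mu$ be an absolutely continuous probability measure on $\mathbb{R}$ with distribution function $F$, let $p>1$, and let $\psi:\mathbb{R}\to[0,\infty)$ be nonincreasing and measurable. Then $\int_{\mathbb{R}} \left(\frac{\int_{(-\infty,x]}\psi\,d\mu}{F(x)}\right)^p d\mu(x) \ge \frac{p}{p-1}\int_{\mathbb{R}} \psi(y)^p\big(1-F(y)^{p-1}\big)\,d\mu(y) \ge \int_{\mathbb{R}}\psi(y)^p\,d\mu(y)$. -/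
/-!
Write `F x = μ (Iic x)` and `G x = ∫_{(-∞, x]} ψ dμ`. As `μ` has no atoms, `F` is continuous
and pushes `μ` forward to Lebesgue measure on `[0, 1]`, so `∫ g ∘ F dμ = ∫₀¹ g`; the same holds
for any finite atomless measure `ν`, with `[0, 1]` replaced by `[0, ν univ]`. Applied to
`ν = ψ μ` restricted to `(-∞, x]` this gives `p ∫_{(-∞, x]} ψ G ^ (p - 1) dμ = G x ^ p`, and
`ψ y F y ≤ G y` (as `ψ` is nonincreasing) turns it into
`p ∫_{(-∞, x]} ψ ^ p F ^ (p - 1) dμ ≤ G x ^ p`. Dividing by `F x ^ p`, integrating in `x` and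
exchanging the integrals leaves the tail integral
`∫_{[y, ∞)} F ^ (-p) dμ ≥ ∫_{F y}^1 t ^ (-p) dt = (F y ^ (1 - p) - 1) / (p - 1)`, which gives
the first inequality. The second one is Chebyshev's integral inequality for the nonincreasing
functions `ψ ^ p` and `1 - F ^ (p - 1)`, combined with `∫ F ^ (p - 1) dμ = 1 / p`.
-/

open MeasureTheory Set ENNReal

open Filter Topology

theorem ENNReal.mul_add_mul_le_mul_add_mul {a b c d : ℝ≥0∞} (hab : a ≤ b) (hcd : c ≤ d) :
    a * d + b * c ≤ a * c + b * d := by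
  obtain ⟨e, rfl⟩ := exists_add_of_le hab
  calc a * d + (a + e) * c = a * c + a * d + e * c := by ring
    _ ≤ a * c + a * d + e * d := by gcongr
    _ = a * c + (a + e) * d := by ring

theorem ENNReal.mul_add_mul_le_mul_add_mul_of_monovary {ι : Type*} {f g : ι → ℝ≥0∞}
    (hfg : Monovary f g) (i j : ι) : f i * g j + f j * g i ≤ f i * g i + f j * g j := by
  rcases lt_trichotomy (g i) (g j) with h | h | h
  · exact ENNReal.mul_add_mul_le_mul_add_mul (hfg h) h.le
  · rw [h]
  · rw [add_comm (f i * g j), add_comm (f i * g i)]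
    exact ENNReal.mul_add_mul_le_mul_add_mul (hfg h) h.le

theorem lintegral_mul_lintegral_le_of_monovary {α : Type*} [MeasurableSpace α] (μ : Measure α)
    {f g : α → ℝ≥0∞} (hf : Measurable f) (hg : Measurable g) (hfg : Monovary f g) :
    (∫⁻ x, f x ∂μ) * ∫⁻ x, g x ∂μ ≤ μ univ * ∫⁻ x, f x * g x ∂μ := by
  have key :
      2 * ((∫⁻ x, f x ∂μ) * ∫⁻ x, g x ∂μ) ≤ 2 * (μ univ * ∫⁻ x, f x * g x ∂μ) :=
    calc 2 * ((∫⁻ x, f x ∂μ) * ∫⁻ x, g x ∂μ)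
        = ∫⁻ x, ∫⁻ y, f x * g y + f y * g x ∂μ ∂μ := by
          simp_rw [lintegral_add_left (hg.const_mul _), lintegral_const_mul _ hg,
            lintegral_mul_const _ hf]
          rw [lintegral_add_left (hf.mul_const _), lintegral_mul_const _ hf,
            lintegral_const_mul _ hg, two_mul]
      _ ≤ ∫⁻ x, ∫⁻ y, f x * g x + f y * g y ∂μ ∂μ := by
          refine lintegral_mono fun x => lintegral_mono fun y => ?_
          exact ENNReal.mul_add_mul_le_mul_add_mul_of_monovary hfg x y
      _ = 2 * (μ univ * ∫⁻ x, f x * g x ∂μ) := by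
          simp_rw [lintegral_add_left measurable_const, lintegral_const]
          rw [lintegral_add_left (by fun_prop), lintegral_mul_const _ (by fun_prop),
            lintegral_const]
          ring
  exact (ENNReal.mul_le_mul_iff_right two_ne_zero ofNat_ne_top).1 key

theorem setLIntegral_Ioc_ofReal_rpow {a b r : ℝ} (ha : 0 ≤ a) (hab : a ≤ b)
    (hr : -1 < r ∨ r ≠ -1 ∧ 0 < a) :
    ∫⁻ t in Ioc a b, ENNReal.ofReal t ^ r
      = ENNReal.ofReal ((b ^ (r + 1) - a ^ (r + 1)) / (r + 1)) := by
  have h0 : ∀ h : 0 < a, (0 : ℝ) ∉ uIcc a b := fun h => notMem_uIcc_of_lt h (h.trans_le hab)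
  have hint : IntervalIntegrable (fun t : ℝ => t ^ r) volume a b := by
    rcases hr with hr | ⟨-, ha0⟩
    · exact intervalIntegral.intervalIntegrable_rpow' hr
    · exact intervalIntegral.intervalIntegrable_rpow (Or.inr (h0 ha0))
  rw [setLIntegral_congr_fun measurableSet_Ioc fun t ht => ofReal_rpow_of_pos (ha.trans_lt ht.1),
    ← ofReal_integral_eq_lintegral_ofReal
      ((intervalIntegrable_iff_integrableOn_Ioc_of_le hab).1 hint),
    ← intervalIntegral.integral_of_le hab,
    integral_rpow (hr.imp_right fun h => ⟨h.1, h0 h.2⟩)]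
  filter_upwards [ae_restrict_mem measurableSet_Ioc] with t ht using
    Real.rpow_nonneg (ha.trans ht.1.le) r

theorem lintegral_setLIntegral_Iic_mul (μ : Measure ℝ) [SFinite μ] {k w : ℝ → ℝ≥0∞}
    (hk : Measurable k) (hw : Measurable w) :
    ∫⁻ x, (∫⁻ y in Iic x, k y ∂μ) * w x ∂μ = ∫⁻ y, k y * ∫⁻ x in Ici y, w x ∂μ ∂μ := by
  have hΦ : Measurable (Function.uncurry fun x y : ℝ => if y ≤ x then k y * w x else 0) :=
    Measurable.ite (measurableSet_le measurable_snd measurable_fst)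
      ((hk.comp measurable_snd).mul (hw.comp measurable_fst)) measurable_const
  calc ∫⁻ x, (∫⁻ y in Iic x, k y ∂μ) * w x ∂μ
      = ∫⁻ x, ∫⁻ y, (if y ≤ x then k y * w x else 0) ∂μ ∂μ := by
        refine lintegral_congr fun x => ?_
        rw [← lintegral_mul_const _ hk, ← lintegral_indicator measurableSet_Iic]
        simp only [indicator_apply, mem_Iic]
    _ = ∫⁻ y, ∫⁻ x, (if y ≤ x then k y * w x else 0) ∂μ ∂μ :=
        lintegral_lintegral_swap hΦ.aemeasurable
    _ = ∫⁻ y, k y * ∫⁻ x in Ici y, w x ∂μ ∂μ := by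
        refine lintegral_congr fun y => ?_
        rw [← lintegral_const_mul _ hw, ← lintegral_indicator measurableSet_Ici]
        simp only [indicator_apply, mem_Ici]

section DistributionFunction

variable (ν : Measure ℝ)

theorem monotone_measure_Iic : Monotone fun x => ν (Iic x) :=
  fun _ _ h => measure_mono (Iic_subset_Iic.2 h)

variable [IsFiniteMeasure ν]

theorem monotone_measureReal_Iic : Monotone fun x => ν.real (Iic x) :=
  fun _ _ h => measureReal_mono (Iic_subset_Iic.2 h)

theorem tendsto_measure_Iic_atBot : Tendsto (fun x => ν (Iic x)) atBot (𝓝 0) := by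
  have := tendsto_measure_iInter_atBot (μ := ν) (fun _ => nullMeasurableSet_Iic) monotone_Iic
    ⟨0, measure_ne_top ν _⟩
  rwa [iInter_Iic_eq_empty_iff.2 (by simp), measure_empty] at this

variable [NullSingletonClass ν]

theorem continuous_measure_Iic : Continuous fun x => ν (Iic x) := by
  set F := fun x => ν (Iic x)
  have hF : Monotone F := monotone_measure_Iic ν
  refine continuous_iff_continuousAt.2 fun b => ?_
  rw [hF.continuousAt_iff_leftLim_eq_rightLim]
  have hlim : Tendsto (fun δ => Function.leftLim F b + ν (Icc (b - δ) (b + δ)))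
      (𝓝[>] 0) (𝓝 (Function.leftLim F b)) := by
    simpa using tendsto_const_nhds.add ((tendsto_measure_Icc ν b).mono_left nhdsWithin_le_nhds)
  refine le_antisymm (hF.leftLim_le_rightLim le_rfl) (ge_of_tendsto hlim ?_)
  refine eventually_nhdsWithin_of_forall fun δ (hδ : 0 < δ) => ?_
  calc Function.rightLim F b ≤ ν (Iic (b + δ)) := hF.rightLim_le (by linarith)
    _ ≤ ν (Iic (b - δ) ∪ Icc (b - δ) (b + δ)) := by
        gcongr
        intro x hx
        by_cases h : x ≤ b - δ
        · exact Or.inl h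
        · exact Or.inr ⟨by linarith, hx⟩
    _ ≤ ν (Iic (b - δ)) + ν (Icc (b - δ) (b + δ)) := measure_union_le _ _
    _ ≤ _ := by gcongr; exact hF.le_leftLim (by linarith)

theorem measure_setOf_measure_Iic_le_s13 (c : ℝ≥0∞) :
    ν {x | ν (Iic x) ≤ c} = min c (ν univ) := by
  have hF := monotone_measure_Iic ν
  set S := {x | ν (Iic x) ≤ c}
  refine le_antisymm (le_min ?_ (measure_mono (subset_univ _))) ?_
  · rcases S.eq_empty_or_nonempty with hS | hS
    · simp [hS]
    by_cases hbdd : BddAbove S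
    · calc ν S ≤ ν (Iic (sSup S)) := measure_mono fun x hx => le_csSup hbdd hx
        _ ≤ c := (isClosed_le (continuous_measure_Iic ν) continuous_const).csSup_mem hS hbdd
    · refine (measure_mono (subset_univ S)).trans
        (le_of_tendsto' (tendsto_measure_Iic_atTop ν) fun x => ?_)
      obtain ⟨y, hy, hxy⟩ := not_bddAbove_iff.1 hbdd x
      exact (hF hxy.le).trans hy
  · rcases le_or_gt (ν univ) c with hc | hc
    · rw [min_eq_right hc, show S = univ from eq_univ_of_forall fun x =>
        (measure_mono (subset_univ _)).trans hc]
    rcases eq_zero_or_pos c with rfl | hc0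
    · simp
    obtain ⟨x, hx⟩ : c ∈ range fun x => ν (Iic x) :=
      mem_range_of_exists_le_of_exists_ge (continuous_measure_Iic ν)
        (((tendsto_measure_Iic_atBot ν).eventually (gt_mem_nhds hc0)).exists.imp fun _ => le_of_lt)
        (((tendsto_measure_Iic_atTop ν).eventually (lt_mem_nhds hc)).exists.imp fun _ => le_of_lt)
    rw [min_eq_left hc.le, ← hx]
    exact measure_mono fun y hy => (hF hy).trans hx.le

theorem ae_measureReal_Iic_pos : ∀ᵐ y ∂ν, 0 < ν.real (Iic y) := by
  have h := measure_setOf_measure_Iic_le_s13 ν 0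
  rw [zero_min] at h
  filter_upwards [measure_eq_zero_iff_ae_notMem.1 h] with y hy
  exact toReal_pos (fun h => hy h.le) (measure_ne_top ν _)

theorem map_measureReal_Iic :
    ν.map (fun x => ν.real (Iic x)) = volume.restrict (Icc 0 (ν.real univ)) := by
  refine Measure.ext_of_Iic _ _ fun a => ?_
  rw [Measure.map_apply (monotone_measureReal_Iic ν).measurable measurableSet_Iic,
    Measure.restrict_apply measurableSet_Iic]
  rcases lt_or_ge a 0 with ha | ha
  · have h1 : (fun x => ν.real (Iic x)) ⁻¹' Iic a = ∅ :=
      eq_empty_of_forall_notMem fun x (hx : ν.real (Iic x) ≤ a) =>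
        (hx.trans_lt ha).not_ge measureReal_nonneg
    have h2 : Iic a ∩ Icc 0 (ν.real univ) = ∅ :=
      eq_empty_of_forall_notMem fun x hx => (hx.1.trans_lt ha).not_ge hx.2.1
    rw [h1, h2, measure_empty, measure_empty]
  have h1 : (fun x => ν.real (Iic x)) ⁻¹' Iic a = {x | ν (Iic x) ≤ ENNReal.ofReal a} := by
    ext x
    exact (le_ofReal_iff_toReal_le (measure_ne_top ν _) ha).symm
  have h2 : Iic a ∩ Icc 0 (ν.real univ) = Icc 0 (min a (ν.real univ)) := by
    ext x; simp [and_left_comm]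
  rw [h1, h2, measure_setOf_measure_Iic_le_s13, Real.volume_Icc, sub_zero, ofReal_min,
    ofReal_measureReal]

theorem lintegral_comp_measureReal_Iic {g : ℝ → ℝ≥0∞} (hg : Measurable g) :
    ∫⁻ x, g (ν.real (Iic x)) ∂ν = ∫⁻ t in Icc 0 (ν.real univ), g t := by
  rw [← map_measureReal_Iic, lintegral_map hg (monotone_measureReal_Iic ν).measurable]

theorem lintegral_measure_Iic_rpow {p : ℝ} (hp : 0 < p) :
    ∫⁻ x, ν (Iic x) ^ (p - 1) ∂ν = ENNReal.ofReal (ν.real univ ^ p / p) := by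
  calc ∫⁻ x, ν (Iic x) ^ (p - 1) ∂ν
        = ∫⁻ x, ENNReal.ofReal (ν.real (Iic x)) ^ (p - 1) ∂ν :=
        lintegral_congr fun x => by rw [ofReal_measureReal]
    _ = ∫⁻ t in Icc 0 (ν.real univ), ENNReal.ofReal t ^ (p - 1) :=
        lintegral_comp_measureReal_Iic ν (measurable_ofReal.pow_const _)
    _ = ∫⁻ t in Ioc 0 (ν.real univ), ENNReal.ofReal t ^ (p - 1) :=
        setLIntegral_congr Ioc_ae_eq_Icc.symm
    _ = ENNReal.ofReal (ν.real univ ^ p / p) := by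
        rw [setLIntegral_Ioc_ofReal_rpow le_rfl measureReal_nonneg (Or.inl (by linarith)),
          sub_add_cancel, Real.zero_rpow hp.ne', sub_zero]

end DistributionFunction

theorem ofReal_mul_setLIntegral_Iic_rpow_le (μ : Measure ℝ) [NullSingletonClass μ] {p : ℝ}
    (hp : 1 ≤ p) {ψ : ℝ → ℝ≥0∞} (hψ : Antitone ψ) (x : ℝ) :
    ENNReal.ofReal p * ∫⁻ y in Iic x, ψ y ^ p * μ (Iic y) ^ (p - 1) ∂μ
      ≤ (∫⁻ y in Iic x, ψ y ∂μ) ^ p := by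
  have hp0 : 0 < p := by linarith
  rcases eq_top_or_lt_top (∫⁻ y in Iic x, ψ y ∂μ) with hG | hG
  · rw [hG, top_rpow_of_pos hp0]
    exact le_top
  set ν := (μ.withDensity ψ).restrict (Iic x)
  have hνIic : ∀ y ≤ x, ν (Iic y) = ∫⁻ z in Iic y, ψ z ∂μ := fun y hy => by
    rw [Measure.restrict_apply measurableSet_Iic, inter_eq_left.2 (Iic_subset_Iic.2 hy),
      withDensity_apply _ measurableSet_Iic]
  have hνuniv : ν univ = ∫⁻ y in Iic x, ψ y ∂μ := by
    rw [Measure.restrict_apply_univ, withDensity_apply _ measurableSet_Iic]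
  have : IsFiniteMeasure ν := ⟨hνuniv ▸ hG⟩
  have hψF : ∀ y, ψ y * μ (Iic y) ≤ ∫⁻ z in Iic y, ψ z ∂μ := fun y => by
    rw [← setLIntegral_const]
    exact setLIntegral_mono' measurableSet_Iic fun z hz => hψ hz
  calc ENNReal.ofReal p * ∫⁻ y in Iic x, ψ y ^ p * μ (Iic y) ^ (p - 1) ∂μ
      ≤ ENNReal.ofReal p * ∫⁻ y in Iic x, ψ y * ν (Iic y) ^ (p - 1) ∂μ := by
        refine mul_le_mul_right (setLIntegral_mono' measurableSet_Iic fun y hy => ?_) _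
        calc ψ y ^ p * μ (Iic y) ^ (p - 1) = ψ y ^ (1 + (p - 1)) * μ (Iic y) ^ (p - 1) := by
              rw [add_sub_cancel]
          _ = ψ y * (ψ y * μ (Iic y)) ^ (p - 1) := by
              rw [rpow_add_of_nonneg _ _ zero_le_one (sub_nonneg.2 hp), rpow_one,
                mul_rpow_of_nonneg _ _ (sub_nonneg.2 hp), mul_assoc]
          _ ≤ ψ y * ν (Iic y) ^ (p - 1) := by
              rw [hνIic y hy]
              gcongr
              exact hψF y
    _ = ENNReal.ofReal p * ∫⁻ y, ν (Iic y) ^ (p - 1) ∂ν := by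
        rw [setLIntegral_withDensity_eq_setLIntegral_mul _ hψ.measurable
          ((monotone_measure_Iic ν).measurable.pow_const _) measurableSet_Iic]
        rfl
    _ = ν univ ^ p := by
        rw [lintegral_measure_Iic_rpow ν hp0, ← ofReal_mul hp0.le, mul_div_cancel₀ _ hp0.ne',
          ← ofReal_rpow_of_nonneg measureReal_nonneg hp0.le, ofReal_measureReal]
    _ = (∫⁻ y in Iic x, ψ y ∂μ) ^ p := by rw [hνuniv]

section Probability

variable (μ : Measure ℝ) [IsProbabilityMeasure μ] [NullSingletonClass μ]

theorem ofReal_le_setLIntegral_Ici_inv_rpow {p : ℝ} (hp : 1 < p) {y : ℝ}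
    (hy : 0 < μ.real (Iic y)) :
    ENNReal.ofReal ((μ.real (Iic y) ^ (1 - p) - 1) / (p - 1))
      ≤ ∫⁻ x in Ici y, (μ (Iic x) ^ p)⁻¹ ∂μ := by
  set c := μ.real (Iic y)
  have hc1 : c ≤ 1 := measureReal_le_one
  calc ENNReal.ofReal ((c ^ (1 - p) - 1) / (p - 1))
      = ∫⁻ t in Ioc c 1, ENNReal.ofReal t ^ (-p) := by
        rw [setLIntegral_Ioc_ofReal_rpow hy.le hc1 (Or.inr ⟨by linarith, hy⟩), Real.one_rpow]
        congr 1
        rw [show -p + 1 = 1 - p by ring, ← neg_div_neg_eq, neg_sub, neg_sub]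
    _ = ∫⁻ t in Icc 0 (μ.real univ),
          (Ioi c).indicator (fun t => ENNReal.ofReal t ^ (-p)) t := by
        rw [lintegral_indicator measurableSet_Ioi, Measure.restrict_restrict measurableSet_Ioi,
          probReal_univ]
        congr 2
        ext t
        simp only [mem_inter_iff, mem_Ioi, mem_Icc, mem_Ioc]
        exact ⟨fun h => ⟨h.1, hy.le.trans h.1.le, h.2⟩, fun h => ⟨h.1, h.2.2⟩⟩
    _ = ∫⁻ x, (Ioi c).indicator (fun t => ENNReal.ofReal t ^ (-p)) (μ.real (Iic x)) ∂μ :=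
        (lintegral_comp_measureReal_Iic μ
          ((measurable_ofReal.pow_const _).indicator measurableSet_Ioi)).symm
    _ ≤ ∫⁻ x, (Ici y).indicator (fun x => (μ (Iic x) ^ p)⁻¹) x ∂μ := by
        refine lintegral_mono fun x => ?_
        by_cases hx : c < μ.real (Iic x)
        · have hyx : x ∈ Ici y :=
            le_of_not_gt fun hxy => hx.not_ge (monotone_measureReal_Iic μ hxy.le)
          rw [indicator_of_mem (show μ.real (Iic x) ∈ Ioi c from hx), indicator_of_mem hyx,
            ofReal_measureReal, rpow_neg]
        · rw [indicator_of_notMem (show μ.real (Iic x) ∉ Ioi c from hx)]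
          exact zero_le
    _ = ∫⁻ x in Ici y, (μ (Iic x) ^ p)⁻¹ ∂μ := lintegral_indicator measurableSet_Ici _

theorem ofReal_mul_one_sub_rpow_le_rpow_mul_setLIntegral_Ici {p : ℝ} (hp : 1 < p) {y : ℝ}
    (hy : 0 < μ.real (Iic y)) :
    ENNReal.ofReal (1 / (p - 1)) * (1 - μ (Iic y) ^ (p - 1))
      ≤ μ (Iic y) ^ (p - 1) * ∫⁻ x in Ici y, (μ (Iic x) ^ p)⁻¹ ∂μ := by
  set c := μ.real (Iic y)
  have hcp : c ^ (p - 1) * c ^ (1 - p) = 1 := by rw [← Real.rpow_add hy]; simp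
  have hc : μ (Iic y) ^ (p - 1) = ENNReal.ofReal (c ^ (p - 1)) := by
    rw [← ofReal_rpow_of_pos hy, ofReal_measureReal]
  calc ENNReal.ofReal (1 / (p - 1)) * (1 - μ (Iic y) ^ (p - 1))
      = ENNReal.ofReal (c ^ (p - 1)) * ENNReal.ofReal ((c ^ (1 - p) - 1) / (p - 1)) := by
        rw [hc, ← ofReal_one, ← ofReal_sub _ (by positivity), ← ofReal_mul (by positivity),
          ← ofReal_mul (by positivity), mul_div_assoc', mul_sub (c ^ (p - 1)), hcp]
        congr 1
        ring
    _ ≤ _ := by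
        rw [hc]
        gcongr
        exact ofReal_le_setLIntegral_Ici_inv_rpow μ hp hy

theorem lintegral_rpow_le_ofReal_div_mul_lintegral {p : ℝ} (hp : 1 < p) {ψ : ℝ → ℝ≥0∞}
    (hψ : Antitone ψ) :
    ∫⁻ y, ψ y ^ p ∂μ
      ≤ ENNReal.ofReal (p / (p - 1)) * ∫⁻ y, ψ y ^ p * (1 - μ (Iic y) ^ (p - 1)) ∂μ := by
  have hψp : Antitone fun y => ψ y ^ p := fun a b h => rpow_le_rpow (hψ h) (by linarith)
  have hF : Monotone fun y => μ (Iic y) ^ (p - 1) :=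
    fun a b h => rpow_le_rpow (monotone_measure_Iic μ h) (by linarith)
  have hFint : ∫⁻ y, μ (Iic y) ^ (p - 1) ∂μ = ENNReal.ofReal (1 / p) := by
    rw [lintegral_measure_Iic_rpow μ (by linarith), probReal_univ, Real.one_rpow]
  have hmass : ∫⁻ y, (1 - μ (Iic y) ^ (p - 1)) ∂μ = ENNReal.ofReal ((p - 1) / p) := by
    rw [lintegral_sub' hF.measurable.aemeasurable (hFint ▸ ofReal_ne_top)
      (ae_of_all _ fun y => rpow_le_one prob_le_one (by linarith)), lintegral_one, measure_univ,
      hFint, ← ofReal_one, ← ofReal_sub _ (by positivity)]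
    congr 1
    field_simp
  have hone : Antitone fun y => 1 - μ (Iic y) ^ (p - 1) := fun a b h => tsub_le_tsub_left (hF h) 1
  have hcheb : (∫⁻ y, ψ y ^ p ∂μ) * ∫⁻ y, (1 - μ (Iic y) ^ (p - 1)) ∂μ
      ≤ ∫⁻ y, ψ y ^ p * (1 - μ (Iic y) ^ (p - 1)) ∂μ := by
    simpa only [measure_univ, one_mul] using
      lintegral_mul_lintegral_le_of_monovary μ hψp.measurable hone.measurable (hψp.monovary hone)
  have hp' : ENNReal.ofReal (p / (p - 1)) * ENNReal.ofReal ((p - 1) / p) = 1 := by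
    have hp1 : p - 1 ≠ 0 := (sub_pos.2 hp).ne'
    have hp0 : p ≠ 0 := (zero_lt_one.trans hp).ne'
    rw [← ofReal_mul (div_nonneg (by linarith) (by linarith)), div_mul_div_cancel₀ hp1,
      div_self hp0, ofReal_one]
  calc ∫⁻ y, ψ y ^ p ∂μ
      = ENNReal.ofReal (p / (p - 1))
          * ((∫⁻ y, ψ y ^ p ∂μ) * ENNReal.ofReal ((p - 1) / p)) := by
        rw [mul_comm (∫⁻ y, ψ y ^ p ∂μ), ← mul_assoc, hp', one_mul]
    _ ≤ _ := by
        rw [← hmass]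
        exact mul_le_mul_right hcheb _

theorem ofReal_div_mul_lintegral_le_lintegral_div_rpow {p : ℝ} (hp : 1 < p) {ψ : ℝ → ℝ≥0∞}
    (hψ : Antitone ψ) :
    ENNReal.ofReal (p / (p - 1)) * ∫⁻ y, ψ y ^ p * (1 - μ (Iic y) ^ (p - 1)) ∂μ
      ≤ ∫⁻ x, ((∫⁻ y in Iic x, ψ y ∂μ) / μ (Iic x)) ^ p ∂μ := by
  set k := fun y => ψ y ^ p * μ (Iic y) ^ (p - 1)
  have hk : Measurable k :=
    (hψ.measurable.pow_const _).mul ((monotone_measure_Iic μ).measurable.pow_const _)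
  have hw : Measurable fun x => (μ (Iic x) ^ p)⁻¹ :=
    ((monotone_measure_Iic μ).measurable.pow_const _).inv
  have htail : ∀ᵐ y ∂μ, ENNReal.ofReal (1 / (p - 1)) * (ψ y ^ p * (1 - μ (Iic y) ^ (p - 1)))
      ≤ k y * ∫⁻ x in Ici y, (μ (Iic x) ^ p)⁻¹ ∂μ := by
    filter_upwards [ae_measureReal_Iic_pos μ] with y hy
    rw [mul_left_comm, mul_assoc]
    exact mul_le_mul_right (ofReal_mul_one_sub_rpow_le_rpow_mul_setLIntegral_Ici μ hp hy) _
  have hhardy : ∀ x, ENNReal.ofReal p * ((∫⁻ y in Iic x, k y ∂μ) * (μ (Iic x) ^ p)⁻¹)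
      ≤ ((∫⁻ y in Iic x, ψ y ∂μ) / μ (Iic x)) ^ p := fun x => by
    rw [div_rpow_of_nonneg _ _ (by linarith), div_eq_mul_inv, ← mul_assoc]
    gcongr
    exact ofReal_mul_setLIntegral_Iic_rpow_le μ hp.le hψ x
  calc ENNReal.ofReal (p / (p - 1)) * ∫⁻ y, ψ y ^ p * (1 - μ (Iic y) ^ (p - 1)) ∂μ
      = ENNReal.ofReal p *
          ∫⁻ y, ENNReal.ofReal (1 / (p - 1)) * (ψ y ^ p * (1 - μ (Iic y) ^ (p - 1))) ∂μ := by
        rw [lintegral_const_mul' _ _ ofReal_ne_top, ← mul_assoc, ← ofReal_mul (by linarith),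
          mul_one_div]
    _ ≤ ENNReal.ofReal p * ∫⁻ y, k y * ∫⁻ x in Ici y, (μ (Iic x) ^ p)⁻¹ ∂μ ∂μ :=
        mul_le_mul_right (lintegral_mono_ae htail) _
    _ = ∫⁻ x, ENNReal.ofReal p * ((∫⁻ y in Iic x, k y ∂μ) * (μ (Iic x) ^ p)⁻¹) ∂μ := by
        rw [← lintegral_setLIntegral_Iic_mul μ hk hw, lintegral_const_mul' _ _ ofReal_ne_top]
    _ ≤ _ := lintegral_mono hhardy

end Probability

theorem probability_reverse_hardy_general (μ : Measure ℝ) [IsProbabilityMeasure μ]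
    (hac : μ ≪ volume) (p : ℝ) (hp : 1 < p)
    (ψ : ℝ → ℝ≥0∞) (hmono : Antitone ψ) :
    ENNReal.ofReal (p / (p - 1)) *
        (∫⁻ y, ψ y ^ p * (1 - μ (Iic y) ^ (p - 1)) ∂μ)
      ≤ ∫⁻ x, ((∫⁻ y in Iic x, ψ y ∂μ) / μ (Iic x)) ^ p ∂μ
    ∧ (∫⁻ y, ψ y ^ p ∂μ)
      ≤ ENNReal.ofReal (p / (p - 1)) *
          ∫⁻ y, ψ y ^ p * (1 - μ (Iic y) ^ (p - 1)) ∂μ := by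
  have : NullSingletonClass μ := ⟨fun a => hac Real.volume_singleton⟩
  exact ⟨ofReal_div_mul_lintegral_le_lintegral_div_rpow μ hp hmono,
    lintegral_rpow_le_ofReal_div_mul_lintegral μ hp hmono⟩

/-- Reverse Hardy inequality in probabilistic form, for an absolutely
continuous probability measure `μ` with distribution function
`F x = μ (Iic x)` and a nonincreasing nonnegative `ψ`. -/
theorem probability_reverse_hardy (μ : Measure ℝ) [IsProbabilityMeasure μ]
    (hac : μ ≪ volume) (p : ℝ) (hp : 1 < p)
    (ψ : ℝ → ℝ≥0∞) (hψ : Measurable ψ) (hmono : Antitone ψ) :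
    ENNReal.ofReal (p / (p - 1)) *
        (∫⁻ y, ψ y ^ p * (1 - μ (Iic y) ^ (p - 1)) ∂μ)
      ≤ ∫⁻ x, ((∫⁻ y in Iic x, ψ y ∂μ) / μ (Iic x)) ^ p ∂μ
    ∧ (∫⁻ y, ψ y ^ p ∂μ)
      ≤ ENNReal.ofReal (p / (p - 1)) *
          ∫⁻ y, ψ y ^ p * (1 - μ (Iic y) ^ (p - 1)) ∂μ :=
  probability_reverse_hardy_general μ hac p hp ψ hmono
end

section
/- Let $p>1$ and let $\psi:(0,\infty)\to[0,\infty)$ be nonincreasing with $\int_0^\infty\psi^p<\infty$. Then $\int_0^\infty\left(\frac{1}{x}\int_0^x\psi(y)\,dy\right)^p dx \ge \frac{p}{p-1}\int_0^\infty \psi(y)^p\,dy$. -/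
/-!
Write `F x = ∫_0^x ψ`. Since `ψ` is nonincreasing, `x ψ(x) ≤ F(x)`, hence
`ψ^p ≤ ψ F^(p-1) x^(1-p)`. As `∫_y^∞ x^(-p) dx = y^(1-p)/(p-1)`, Tonelli turns the integral of the
right-hand side into `(p-1) ∫_0^∞ x^(-p) ∫_0^x ψ F^(p-1)`, and the chain-rule bound
`p ∫_0^x ψ F^(p-1) ≤ F(x)^p` finishes the proof. That bound holds for `F y = ν (a, y]` with any
atomless measure `ν`: by right continuity of `F`, `ν {y ∈ (a, x] | t < F y} ≤ F x - t`, the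
Lebesgue measure of `{s ∈ (0, F x] | t < s}`, so the layer-cake formula compares
`∫_(a, x] F^(p-1) dν` with `∫_0^(F x) s^(p-1) ds`.
-/

open MeasureTheory Set ENNReal Filter Topology

lemma lintegral_Ioc_ofReal_rpow_sub_one {p : ℝ} (hp : 0 < p) {b : ℝ} (hb : 0 ≤ b) :
    ∫⁻ t in Ioc 0 b, ENNReal.ofReal (t ^ (p - 1)) = ENNReal.ofReal (b ^ p / p) := by
  rw [← ofReal_integral_eq_lintegral_ofReal
      (intervalIntegral.intervalIntegrable_rpow' (by linarith)).1
      ((ae_restrict_iff' measurableSet_Ioc).2 (ae_of_all _ fun t ht ↦ Real.rpow_nonneg ht.1.le _)),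
    ← intervalIntegral.integral_of_le hb, integral_rpow (Or.inl (by linarith)), sub_add_cancel,
    Real.zero_rpow hp.ne', sub_zero]

lemma lintegral_Ici_ofReal_rpow_neg {p : ℝ} (hp : 1 < p) {y : ℝ} (hy : 0 < y) :
    ∫⁻ x in Ici y, ENNReal.ofReal (x ^ (-p)) = ENNReal.ofReal (y ^ (1 - p) / (p - 1)) := by
  rw [← setLIntegral_congr Ioi_ae_eq_Ici, ← ofReal_integral_eq_lintegral_ofReal
      (integrableOn_Ioi_rpow_of_lt (by linarith) hy)
      ((ae_restrict_iff' measurableSet_Ioi).2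
        (ae_of_all _ fun x hx ↦ Real.rpow_nonneg (hy.trans hx).le _)),
    integral_Ioi_rpow_of_lt (by linarith) hy, neg_div, ← div_neg]
  ring_nf

lemma lintegral_Ioi_mul_lintegral_Ioc {w g : ℝ → ℝ≥0∞} (hw : Measurable w) (hg : Measurable g)
    (a : ℝ) :
    ∫⁻ x in Ioi a, w x * ∫⁻ y in Ioc a x, g y = ∫⁻ y in Ioi a, g y * ∫⁻ x in Ici y, w x := by
  set K : ℝ → ℝ → ℝ≥0∞ := fun x y ↦ if y ≤ x then w x * g y else 0
  have hK : Measurable (Function.uncurry K) :=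
    Measurable.ite (measurableSet_le measurable_snd measurable_fst)
      ((hw.comp measurable_fst).mul (hg.comp measurable_snd)) measurable_const
  have hx : ∀ x, ∫⁻ y in Ioi a, K x y = w x * ∫⁻ y in Ioc a x, g y := fun x ↦ by
    rw [← lintegral_const_mul _ hg, ← Iic_inter_Ioi, ← Measure.restrict_restrict measurableSet_Iic,
      ← lintegral_indicator measurableSet_Iic]
    simp only [K, indicator_apply, mem_Iic]
  have hy : ∀ y ∈ Ioi a, ∫⁻ x in Ioi a, K x y = g y * ∫⁻ x in Ici y, w x := fun y hy ↦ by
    rw [mul_comm, ← lintegral_mul_const _ hw, ← inter_eq_self_of_subset_left (Ici_subset_Ioi.2 hy),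
      ← Measure.restrict_restrict measurableSet_Ici, ← lintegral_indicator measurableSet_Ici]
    simp only [K, indicator_apply, mem_Ici]
  simp_rw [← hx]
  rw [lintegral_lintegral_swap hK.aemeasurable]
  exact setLIntegral_congr_fun measurableSet_Ioi hy

lemma lintegral_ofReal_rpow_le_of_meas_lt_le {α β : Type*} [MeasurableSpace α]
    [MeasurableSpace β] {μ : Measure α} {ν : Measure β} {f : α → ℝ} {g : β → ℝ}
    (hf : 0 ≤ᵐ[μ] f) (hfm : AEMeasurable f μ) (hg : 0 ≤ᵐ[ν] g) (hgm : AEMeasurable g ν)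
    {q : ℝ} (hq : 0 < q) (h : ∀ t > 0, μ {a | t < f a} ≤ ν {b | t < g b}) :
    ∫⁻ a, ENNReal.ofReal (f a ^ q) ∂μ ≤ ∫⁻ b, ENNReal.ofReal (g b ^ q) ∂ν := by
  rw [lintegral_rpow_eq_lintegral_meas_lt_mul μ hf hfm hq,
    lintegral_rpow_eq_lintegral_meas_lt_mul ν hg hgm hq]
  gcongr _ * ?_
  exact setLIntegral_mono' measurableSet_Ioi fun t ht ↦ by gcongr; exact h t ht

section MeasureIoc

variable (ν : Measure ℝ) {a : ℝ}

lemma tendsto_measure_Ioc_nhdsGT {z x : ℝ} (hzx : z < x) (hx : ν (Ioc a x) ≠ ∞) :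
    Tendsto (fun y ↦ ν (Ioc a y)) (𝓝[>] z) (𝓝 (ν (Ioc a z))) := by
  have hinter : ⋂ r > z, Ioc a r = Ioc a z := by
    ext y
    simp only [mem_iInter, mem_Ioc]
    exact ⟨fun h ↦ ⟨(h x hzx).1, le_of_forall_gt_imp_ge_of_dense fun r hr ↦ (h r hr).2⟩,
      fun h r hr ↦ ⟨h.1, h.2.trans hr.le⟩⟩
  rw [← hinter]
  exact tendsto_measure_biInter_gt (fun _ _ ↦ measurableSet_Ioc.nullMeasurableSet)
    (fun _ _ _ hij ↦ Ioc_subset_Ioc_right hij) ⟨x, hzx, hx⟩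

lemma measure_Ioc_inter_setOf_lt_le [NullSingletonClass ν] {x : ℝ} (hx : ν (Ioc a x) ≠ ∞)
    (c : ℝ≥0∞) : ν (Ioc a x ∩ {y | c < ν (Ioc a y)}) ≤ ν (Ioc a x) - c := by
  set S := Ioc a x ∩ {y | c < ν (Ioc a y)}
  rcases S.eq_empty_or_nonempty with hS | ⟨y₀, hy₀⟩
  · simp [hS]
  have hbdd : BddBelow S := ⟨a, fun y hy ↦ hy.1.1.le⟩
  set z := sInf S
  have haz : a ≤ z := le_csInf ⟨y₀, hy₀⟩ fun y hy ↦ hy.1.1.le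
  have hzx : z ≤ x := (csInf_le hbdd hy₀).trans hy₀.1.2
  have hSz : ν S ≤ ν (Ioc z x) :=
    (measure_mono fun y hy ↦ ⟨csInf_le hbdd hy, hy.1.2⟩ : ν S ≤ ν (Icc z x)).trans
      (measure_congr Ioc_ae_eq_Icc).ge
  rcases hzx.eq_or_lt with hzx | hzx
  · simp_all
  have hcz : c ≤ ν (Ioc a z) := by
    refine ge_of_tendsto (tendsto_measure_Ioc_nhdsGT ν hzx hx) ?_
    filter_upwards [self_mem_nhdsWithin] with r hr
    obtain ⟨s, hs, hsr⟩ := exists_lt_of_csInf_lt ⟨y₀, hy₀⟩ hr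
    exact hs.2.le.trans (measure_mono (Ioc_subset_Ioc_right hsr.le))
  have hsplit : ν (Ioc a z) + ν (Ioc z x) = ν (Ioc a x) := by
    rw [← measure_union (Ioc_disjoint_Ioc_of_le le_rfl) measurableSet_Ioc,
      Ioc_union_Ioc_eq_Ioc haz hzx.le]
  refine hSz.trans (ENNReal.le_sub_of_add_le_left ?_ (hsplit ▸ add_le_add_left hcz _))
  exact ne_top_of_le_ne_top hx (hcz.trans (measure_mono (Ioc_subset_Ioc_right hzx.le)))

lemma ofReal_mul_setLIntegral_measure_Ioc_rpow_le [NullSingletonClass ν] {p : ℝ} (hp : 1 < p)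
    (x : ℝ) :
    ENNReal.ofReal p * ∫⁻ y in Ioc a x, ν (Ioc a y) ^ (p - 1) ∂ν ≤ ν (Ioc a x) ^ p := by
  by_cases hx : ν (Ioc a x) = ∞
  · simp [hx, ENNReal.top_rpow_of_pos (zero_lt_one.trans hp)]
  set T := (ν (Ioc a x)).toReal
  have hF : ∀ y ∈ Ioc a x, ν (Ioc a y) ≠ ∞ := fun y hy ↦
    ne_top_of_le_ne_top hx (measure_mono (Ioc_subset_Ioc_right hy.2))
  have hFm : Measurable fun y ↦ (ν (Ioc a y)).toReal :=
    (Monotone.measurable fun _ _ h ↦ measure_mono (Ioc_subset_Ioc_right h)).ennreal_toReal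
  have hdistrib : ∀ t > 0, (ν.restrict (Ioc a x)) {y | t < (ν (Ioc a y)).toReal}
      ≤ (volume.restrict (Ioc 0 T)) {s | t < s} := fun t ht ↦ by
    rw [Measure.restrict_apply' measurableSet_Ioc, Measure.restrict_apply' measurableSet_Ioc]
    calc ν ({y | t < (ν (Ioc a y)).toReal} ∩ Ioc a x)
        ≤ ν (Ioc a x ∩ {y | ENNReal.ofReal t < ν (Ioc a y)}) :=
          measure_mono fun y hy ↦ ⟨hy.2, (ofReal_lt_iff_lt_toReal ht.le (hF y hy.2)).2 hy.1⟩
      _ ≤ ν (Ioc a x) - ENNReal.ofReal t := measure_Ioc_inter_setOf_lt_le ν hx _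
      _ = volume ({s | t < s} ∩ Ioc 0 T) := by
        rw [← ofReal_toReal hx, ← ofReal_sub _ ht.le, ← Real.volume_Ioc]
        congr 1
        ext s
        simp only [mem_Ioc, mem_inter_iff, mem_ofPred_eq]
        exact ⟨fun h ↦ ⟨h.1, ht.trans h.1, h.2⟩, fun h ↦ ⟨h.1, h.2.2⟩⟩
  have hlayer : ∫⁻ y in Ioc a x, ν (Ioc a y) ^ (p - 1) ∂ν ≤ ENNReal.ofReal (T ^ p / p) :=
    calc ∫⁻ y in Ioc a x, ν (Ioc a y) ^ (p - 1) ∂ν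
        = ∫⁻ y in Ioc a x, ENNReal.ofReal ((ν (Ioc a y)).toReal ^ (p - 1)) ∂ν := by
          refine setLIntegral_congr_fun measurableSet_Ioc fun y hy ↦ ?_
          rw [← ofReal_rpow_of_nonneg toReal_nonneg (by linarith), ofReal_toReal (hF y hy)]
      _ ≤ ∫⁻ s in Ioc 0 T, ENNReal.ofReal (s ^ (p - 1)) :=
        lintegral_ofReal_rpow_le_of_meas_lt_le (ae_of_all _ fun _ ↦ toReal_nonneg)
          hFm.aemeasurable ((ae_restrict_iff' measurableSet_Ioc).2 (ae_of_all _ fun _ hs ↦ hs.1.le))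
          measurable_id.aemeasurable (by linarith) hdistrib
      _ = ENNReal.ofReal (T ^ p / p) :=
        lintegral_Ioc_ofReal_rpow_sub_one (by linarith) toReal_nonneg
  calc ENNReal.ofReal p * ∫⁻ y in Ioc a x, ν (Ioc a y) ^ (p - 1) ∂ν
      ≤ ENNReal.ofReal p * ENNReal.ofReal (T ^ p / p) := by gcongr
    _ = ν (Ioc a x) ^ p := by
      rw [← ofReal_mul (by linarith), mul_div_cancel₀ _ (by linarith),
        ← ofReal_rpow_of_nonneg toReal_nonneg (by linarith), ofReal_toReal hx]

end MeasureIoc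

lemma ofReal_mul_setLIntegral_mul_rpow_le {ψ : ℝ → ℝ≥0∞} (hψ : Measurable ψ) {p : ℝ}
    (hp : 1 < p) (a x : ℝ) :
    ENNReal.ofReal p * ∫⁻ y in Ioc a x, ψ y * (∫⁻ z in Ioc a y, ψ z) ^ (p - 1)
      ≤ (∫⁻ z in Ioc a x, ψ z) ^ p := by
  have : NullSingletonClass (volume.withDensity ψ) :=
    ⟨fun z ↦ withDensity_absolutelyContinuous _ _ (measure_singleton z)⟩
  have hF : Measurable fun y ↦ volume.withDensity ψ (Ioc a y) ^ (p - 1) :=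
    (Monotone.measurable fun _ _ h ↦ measure_mono (Ioc_subset_Ioc_right h)).pow_const _
  have hdensity := setLIntegral_withDensity_eq_setLIntegral_mul volume hψ hF
    (measurableSet_Ioc (a := a) (b := x))
  simp only [Pi.mul_apply] at hdensity
  simp_rw [← withDensity_apply ψ measurableSet_Ioc, ← hdensity]
  exact ofReal_mul_setLIntegral_measure_Ioc_rpow_le _ hp x

lemma ofReal_sub_mul_le_setLIntegral_Ioc {ψ : ℝ → ℝ≥0∞} {a x : ℝ}
    (hψ : AntitoneOn ψ (Ioc a x)) : ENNReal.ofReal (x - a) * ψ x ≤ ∫⁻ y in Ioc a x, ψ y := by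
  rw [← Real.volume_Ioc, mul_comm, ← setLIntegral_const]
  exact setLIntegral_mono' measurableSet_Ioc fun y hy ↦
    hψ hy ⟨hy.1.trans_le hy.2, le_rfl⟩ hy.2

lemma ofReal_div_sub_one_mul_rpow_le {p : ℝ} (hp : 1 < p) {y : ℝ} (hy : 0 < y) {u v : ℝ≥0∞}
    (h : ENNReal.ofReal y * u ≤ v) :
    ENNReal.ofReal (p / (p - 1)) * u ^ p
      ≤ ENNReal.ofReal p * (u * v ^ (p - 1) * ENNReal.ofReal (y ^ (1 - p) / (p - 1))) := by
  have hy1 : ENNReal.ofReal y ^ (p - 1) * ENNReal.ofReal (y ^ (1 - p)) = 1 := by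
    rw [ofReal_rpow_of_pos hy, ← ofReal_mul (by positivity), ← Real.rpow_add hy]
    simp
  have hconst : ENNReal.ofReal (p / (p - 1)) * ENNReal.ofReal (y ^ (1 - p))
      = ENNReal.ofReal p * ENNReal.ofReal (y ^ (1 - p) / (p - 1)) := by
    rw [← ofReal_mul (by positivity), ← ofReal_mul (by linarith)]
    ring_nf
  have hu : u ^ p ≤ u * v ^ (p - 1) * ENNReal.ofReal (y ^ (1 - p)) :=
    calc u ^ p = u * u ^ (p - 1) := by
          conv_lhs => rw [← add_sub_cancel 1 p]
          rw [rpow_add_of_nonneg _ _ zero_le_one (by linarith), rpow_one]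
      _ = u * ((ENNReal.ofReal y * u) ^ (p - 1) * ENNReal.ofReal (y ^ (1 - p))) := by
          rw [mul_rpow_of_nonneg _ _ (by linarith), mul_right_comm, hy1, one_mul]
      _ ≤ u * v ^ (p - 1) * ENNReal.ofReal (y ^ (1 - p)) := by
          rw [← mul_assoc]; gcongr
  calc ENNReal.ofReal (p / (p - 1)) * u ^ p
      ≤ ENNReal.ofReal (p / (p - 1)) * (u * v ^ (p - 1) * ENNReal.ofReal (y ^ (1 - p))) := by
        gcongr
    _ = u * v ^ (p - 1) * (ENNReal.ofReal (p / (p - 1)) * ENNReal.ofReal (y ^ (1 - p))) := by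
        ring
    _ = _ := by rw [hconst]; ring

theorem integral_reverse_hardy_of_measurable {p : ℝ} (hp : 1 < p) {ψ : ℝ → ℝ≥0∞}
    (hψ : Measurable ψ) (hmono : AntitoneOn ψ (Ioi 0)) :
    ENNReal.ofReal (p / (p - 1)) * ∫⁻ y in Ioi (0 : ℝ), ψ y ^ p
      ≤ ∫⁻ x in Ioi (0 : ℝ), ((∫⁻ y in Ioc (0 : ℝ) x, ψ y) / ENNReal.ofReal x) ^ p := by
  set F : ℝ → ℝ≥0∞ := fun x ↦ ∫⁻ y in Ioc 0 x, ψ y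
  have hF : Measurable F :=
    Monotone.measurable fun _ _ h ↦ lintegral_mono_set (Ioc_subset_Ioc_right h)
  calc ENNReal.ofReal (p / (p - 1)) * ∫⁻ y in Ioi 0, ψ y ^ p
      = ∫⁻ y in Ioi 0, ENNReal.ofReal (p / (p - 1)) * ψ y ^ p :=
        (lintegral_const_mul' _ _ ofReal_ne_top).symm
    _ ≤ ∫⁻ y in Ioi 0,
          ENNReal.ofReal p * (ψ y * F y ^ (p - 1) * ENNReal.ofReal (y ^ (1 - p) / (p - 1))) :=
        setLIntegral_mono' measurableSet_Ioi fun y (hy : 0 < y) ↦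
          ofReal_div_sub_one_mul_rpow_le hp hy
            (by simpa using ofReal_sub_mul_le_setLIntegral_Ioc (hmono.mono Ioc_subset_Ioi_self))
    _ = ENNReal.ofReal p *
          ∫⁻ x in Ioi 0, ENNReal.ofReal (x ^ (-p)) * ∫⁻ y in Ioc 0 x, ψ y * F y ^ (p - 1) := by
        rw [lintegral_const_mul' _ _ ofReal_ne_top, lintegral_Ioi_mul_lintegral_Ioc (by fun_prop)
          (g := fun y ↦ ψ y * F y ^ (p - 1)) (hψ.mul (hF.pow_const _))]
        congr 1
        exact setLIntegral_congr_fun measurableSet_Ioi fun y hy ↦ by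
          rw [lintegral_Ici_ofReal_rpow_neg hp hy]
    _ = ∫⁻ x in Ioi 0, ENNReal.ofReal (x ^ (-p)) *
          (ENNReal.ofReal p * ∫⁻ y in Ioc 0 x, ψ y * F y ^ (p - 1)) := by
        rw [← lintegral_const_mul' _ _ ofReal_ne_top]
        simp only [mul_left_comm]
    _ ≤ ∫⁻ x in Ioi 0, ENNReal.ofReal (x ^ (-p)) * F x ^ p := by
        gcongr with x
        exact ofReal_mul_setLIntegral_mul_rpow_le hψ hp 0 x
    _ = ∫⁻ x in Ioi 0, (F x / ENNReal.ofReal x) ^ p := by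
        refine setLIntegral_congr_fun measurableSet_Ioi fun x (hx : 0 < x) ↦ ?_
        rw [div_rpow_of_nonneg _ _ (by linarith), div_eq_mul_inv, ← rpow_neg,
          ofReal_rpow_of_pos hx, mul_comm]

theorem integral_reverse_hardy_general (p : ℝ) (hp : 1 < p) (ψ : ℝ → ℝ≥0∞)
    (hmono : AntitoneOn ψ (Ioi 0)) :
    ENNReal.ofReal (p / (p - 1)) * ∫⁻ y in Ioi (0 : ℝ), ψ y ^ p
      ≤ ∫⁻ x in Ioi (0 : ℝ),
          ((∫⁻ y in Ioc (0 : ℝ) x, ψ y) / ENNReal.ofReal x) ^ p := by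
  -- Extending `ψ` by `∞` on `(-∞, 0]` makes it antitone, hence measurable.
  set φ : ℝ → ℝ≥0∞ := (Ioi 0).piecewise ψ ⊤
  have hφ : Antitone φ := fun x y hxy ↦ by
    by_cases hx : 0 < x
    · simp [φ, hx, hx.trans_le hxy, hmono hx (hx.trans_le hxy) hxy]
    · simp [φ, hx]
  have hφψ : EqOn φ ψ (Ioi 0) := piecewise_eqOn _ _ _
  have hF : ∀ x, ∫⁻ y in Ioc 0 x, φ y = ∫⁻ y in Ioc 0 x, ψ y := fun x ↦
    setLIntegral_congr_fun measurableSet_Ioc (hφψ.mono Ioc_subset_Ioi_self)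
  have hφ_ineq := integral_reverse_hardy_of_measurable hp hφ.measurable (hφ.antitoneOn _)
  simp only [hF] at hφ_ineq
  rwa [setLIntegral_congr_fun measurableSet_Ioi fun y hy ↦ by rw [hφψ hy]] at hφ_ineq

/-- Continuous reverse Hardy inequality (Renaud; Lyon–Ward). -/
theorem integral_reverse_hardy (p : ℝ) (hp : 1 < p) (ψ : ℝ → ℝ≥0∞)
    (hψ : Measurable ψ) (hmono : AntitoneOn ψ (Ioi 0))
    (hfin : ∫⁻ y in Ioi (0 : ℝ), ψ y ^ p < ⊤) :
    ENNReal.ofReal (p / (p - 1)) * ∫⁻ y in Ioi (0 : ℝ), ψ y ^ p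
      ≤ ∫⁻ x in Ioi (0 : ℝ),
          ((∫⁻ y in Ioc (0 : ℝ) x, ψ y) / ENNReal.ofReal x) ^ p :=
  integral_reverse_hardy_general p hp ψ hmono
end

section
/- Let $p\ge 2$ be an integer and let $c_1\ge c_2\ge\cdots\ge 0$ be a nonincreasing sequence with $\sum_k c_k^p<\infty$. Then $\sum_{n=1}^\infty\left(\frac{1}{n}\sum_{k=1}^n c_k\right)^p \ge \zeta(p)\sum_{k=1}^\infty c_k^p$, where $\zeta$ is the Riemann zeta function. -/
open Finset

namespace DRH


noncomputable def zt (p m : ℕ) : ℝ := ∑' n : ℕ, if m ≤ n then 1 / ((n : ℝ) + 1) ^ p else 0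

lemma summable_base {p : ℕ} (hp : 2 ≤ p) :
    Summable (fun n : ℕ => 1 / ((n : ℝ) + 1) ^ p) := by
  have h2 : Summable (fun n : ℕ => 1 / (n : ℝ) ^ p) :=
    Real.summable_one_div_nat_pow.mpr (by omega)
  have h3 := (summable_nat_add_iff (f := fun n : ℕ => 1 / (n : ℝ) ^ p) 1).mpr h2
  refine h3.congr fun n => ?_
  push_cast
  ring

lemma summable_zt_term {p : ℕ} (hp : 2 ≤ p) (m : ℕ) :
    Summable (fun n : ℕ => if m ≤ n then 1 / ((n : ℝ) + 1) ^ p else 0) := by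
  refine Summable.of_nonneg_of_le (fun n => ?_) (fun n => ?_) (summable_base hp)
  · split <;> positivity
  · split
    · exact le_rfl
    · positivity

lemma zt_nonneg (p m : ℕ) : 0 ≤ zt p m :=
  tsum_nonneg fun n => by split <;> positivity

lemma zt_succ {p : ℕ} (hp : 2 ≤ p) (m : ℕ) :
    zt p m = 1 / ((m : ℝ) + 1) ^ p + zt p (m + 1) := by
  have h1 : (fun n : ℕ => if m ≤ n then 1 / ((n : ℝ) + 1) ^ p else 0)
      = fun n : ℕ => (if n = m then 1 / ((m : ℝ) + 1) ^ p else 0)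
        + (if m + 1 ≤ n then 1 / ((n : ℝ) + 1) ^ p else 0) := by
    funext n
    rcases lt_trichotomy n m with h | h | h
    · rw [if_neg (by omega), if_neg (by omega), if_neg (by omega)]; ring
    · subst h; rw [if_pos le_rfl, if_pos rfl, if_neg (by omega)]; ring
    · rw [if_pos (by omega), if_neg (by omega), if_pos (by omega)]; ring
  rw [zt, h1, Summable.tsum_add ⟨_, hasSum_ite_eq m _⟩ (summable_zt_term hp (m + 1)), tsum_ite_eq]
  rfl

lemma zt_shift {p : ℕ} (hp : 2 ≤ p) (m : ℕ) :
    zt p m = ∑' j : ℕ, 1 / ((j : ℝ) + m + 1) ^ p := by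
  have h := (Summable.sum_add_tsum_nat_add (f := fun n : ℕ => if m ≤ n then 1 / ((n : ℝ) + 1) ^ p else 0)
    m (summable_zt_term hp m))
  have h0 : ∑ i ∈ range m, (if m ≤ i then 1 / ((i : ℝ) + 1) ^ p else 0) = 0 := by
    refine Finset.sum_eq_zero fun i hi => ?_
    rw [if_neg (by simp at hi; omega)]
  rw [zt, ← h, h0, zero_add]
  refine tsum_congr fun j => ?_
  rw [if_pos (by omega : m ≤ j + m)]
  push_cast
  ring_nf




lemma summable_shift {p : ℕ} (hp : 2 ≤ p) (m : ℕ) :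
    Summable (fun j : ℕ => 1 / ((j : ℝ) + m + 1) ^ p) := by
  have h3 := (summable_nat_add_iff (f := fun n : ℕ => 1 / ((n : ℝ) + 1) ^ p) m).mpr
    (summable_base hp)
  refine h3.congr fun n => ?_
  push_cast; ring_nf

lemma zt_tail_bound {p : ℕ} (hp : 2 ≤ p) {L : ℕ} (hL : 1 ≤ L) :
    zt p 1 ≤ (L : ℝ) ^ (p - 1) * zt p L := by
  have hL0 : (0 : ℝ) < L := by exact_mod_cast hL
  set f : ℕ → ℝ := fun j => 1 / ((j : ℝ) + L + 1) ^ p with hf_def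
  have hf : Summable f := summable_shift hp L
  have hfnn : ∀ j, 0 ≤ f j := fun j => by positivity
  set g : ℕ → ℝ := fun n => ∑ i ∈ range L, f (L * n + i) with hg_def
  have hgnn : ∀ n, 0 ≤ g n := fun n => Finset.sum_nonneg fun i _ => hfnn _
  have hpart : ∀ N, ∑ n ∈ range N, g n = ∑ j ∈ range (L * N), f j := by
    intro N
    induction N with
    | zero => simp
    | succ N ih =>
        rw [Finset.sum_range_succ, ih, Nat.mul_succ, Finset.sum_range_add]
  have hgle : ∀ N, ∑ n ∈ range N, g n ≤ ∑' j, f j := by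
    intro N; rw [hpart]; exact Summable.sum_le_tsum _ (fun j _ => hfnn j) hf
  have hg : Summable g := summable_of_sum_range_le hgnn hgle
  have h1 : ∑' n, g n ≤ ∑' j, f j := Real.tsum_le_of_sum_range_le hgnn hgle
  -- termwise lower bound for g
  have hterm : ∀ n : ℕ, (L : ℝ) * (1 / ((L : ℝ) * ((n : ℝ) + 2)) ^ p) ≤ g n := by
    intro n
    have : ∀ i ∈ range L, 1 / ((L : ℝ) * ((n : ℝ) + 2)) ^ p ≤ f (L * n + i) := by
      intro i hi
      have hi' : i < L := Finset.mem_range.mp hi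
      have hle : ((L * n + i : ℕ) : ℝ) + L + 1 ≤ (L : ℝ) * ((n : ℝ) + 2) := by
        have hi2 : (i : ℝ) + 1 ≤ (L : ℝ) := by exact_mod_cast hi'
        push_cast
        nlinarith [hi2]
      have hpos : (0 : ℝ) < ((L * n + i : ℕ) : ℝ) + L + 1 := by positivity
      have := pow_le_pow_left₀ hpos.le hle p
      exact one_div_le_one_div_of_le (by positivity) this
    calc (L : ℝ) * (1 / ((L : ℝ) * ((n : ℝ) + 2)) ^ p)
        = ∑ _i ∈ range L, 1 / ((L : ℝ) * ((n : ℝ) + 2)) ^ p := by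
          rw [Finset.sum_const, Finset.card_range, nsmul_eq_mul]
      _ ≤ ∑ i ∈ range L, f (L * n + i) := Finset.sum_le_sum this
  have hLne : (L : ℝ) ≠ 0 := ne_of_gt hL0
  have hsum2 : Summable (fun n : ℕ => (L : ℝ) * (1 / ((L : ℝ) * ((n : ℝ) + 2)) ^ p)) := by
    have h2 := summable_shift hp 1
    refine ((h2.mul_left ((L:ℝ) * (1 / (L:ℝ)^p))).congr fun n => ?_)
    have hn : ((n:ℝ) + ((1:ℕ):ℝ) + 1) = (n:ℝ) + 2 := by push_cast; ring
    rw [mul_pow, hn]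
    rw [mul_one_div, mul_one_div, mul_one_div, div_div]
  have h2 : ∑' (n : ℕ), (L : ℝ) * (1 / ((L : ℝ) * ((n : ℝ) + 2)) ^ p) ≤ ∑' (n : ℕ), g n :=
    Summable.tsum_le_tsum hterm hsum2 hg
  have hzt : zt p L = ∑' j, f j := zt_shift hp L
  have hchain : ∑' (n : ℕ), (L : ℝ) * (1 / ((L : ℝ) * ((n : ℝ) + 2)) ^ p) ≤ zt p L := by
    rw [hzt]; exact h2.trans h1
  -- multiply by L^(p-1)
  have hmul := mul_le_mul_of_nonneg_left hchain (by positivity : (0:ℝ) ≤ (L:ℝ) ^ (p - 1))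
  refine le_trans (le_of_eq ?_) hmul
  rw [← tsum_mul_left, zt_shift hp 1]
  refine tsum_congr fun (n : ℕ) => ?_
  have hLp : (L : ℝ) ^ (p - 1) * L = (L : ℝ) ^ p := by
    rw [← pow_succ]
    congr 1
    omega
  have hn : ((n:ℝ) + ((1:ℕ):ℝ) + 1) = (n:ℝ) + 2 := by push_cast; ring
  rw [mul_pow, ← mul_assoc, hLp, hn, mul_one_div, eq_div_iff (by positivity)]
  field_simp

lemma zt_identity {p : ℕ} (hp : 2 ≤ p) : ∀ l : ℕ,
    ∑ m ∈ range (l + 1), (((m : ℝ) + 1) ^ p - (m : ℝ) ^ p) * zt p m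
      = ((l : ℝ) + 1) + ((l : ℝ) + 1) ^ p * zt p (l + 1) := by
  intro l
  induction l with
  | zero =>
      rw [Finset.sum_range_one]
      have h0 : zt p 0 = 1 + zt p 1 := by
        rw [zt_succ hp 0]; norm_num
      rw [h0]
      norm_num
      rw [zero_pow (by omega : p ≠ 0)]
      ring
  | succ l ih =>
      rw [Finset.sum_range_succ, ih, zt_succ hp (l + 1)]
      push_cast
      have hne : ((l : ℝ) + 1 + 1) ^ p ≠ 0 := by positivity
      field_simp
      ring

lemma prefixD {p : ℕ} (hp : 2 ≤ p) (l : ℕ) :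
    ((l : ℝ) + 1) * zt p 0 ≤ ∑ m ∈ range (l + 1), (((m : ℝ) + 1) ^ p - (m : ℝ) ^ p) * zt p m := by
  rw [zt_identity hp l]
  have h0 : zt p 0 = 1 + zt p 1 := by rw [zt_succ hp 0]; norm_num
  rw [h0]
  have htail := zt_tail_bound hp (L := l + 1) (by omega)
  have hcast : ((l + 1 : ℕ) : ℝ) = (l : ℝ) + 1 := by push_cast; ring
  rw [hcast] at htail
  have hl1 : (0 : ℝ) ≤ (l : ℝ) + 1 := by positivity
  have hpow : ((l : ℝ) + 1) ^ p = ((l : ℝ) + 1) * ((l : ℝ) + 1) ^ (p - 1) := by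
    rw [← pow_succ']
    congr 1
    omega
  have h2 := mul_le_mul_of_nonneg_left htail hl1
  rw [hpow, mul_assoc]
  nlinarith [h2]



/-- Abel-type comparison: if all prefix sums of `γ` are nonnegative and `d` is
nonincreasing and nonnegative, then `∑ γ m * d m ≥ 0`. -/
lemma abel_nonneg (γ d : ℕ → ℝ) (hd : ∀ m, d (m + 1) ≤ d m) (hd0 : ∀ m, 0 ≤ d m)
    (hγ : ∀ N, 0 ≤ ∑ m ∈ range N, γ m) (N : ℕ) :
    0 ≤ ∑ m ∈ range N, γ m * d m := by
  have hid : ∀ M : ℕ, ∑ m ∈ range M, γ m * d m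
      = ∑ j ∈ range M, (∑ i ∈ range (j + 1), γ i) * (d j - d (j + 1))
        + (∑ i ∈ range M, γ i) * d M := by
    intro M
    induction M with
    | zero => simp
    | succ M ih =>
        rw [Finset.sum_range_succ, ih, Finset.sum_range_succ (f := fun j =>
          (∑ i ∈ range (j + 1), γ i) * (d j - d (j + 1))),
          Finset.sum_range_succ (f := γ)]
        ring
  rw [hid N]
  have h1 : 0 ≤ ∑ j ∈ range N, (∑ i ∈ range (j + 1), γ i) * (d j - d (j + 1)) := by
    refine Finset.sum_nonneg fun j _ => mul_nonneg (hγ (j + 1)) (by linarith [hd j])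
  have h2 : 0 ≤ (∑ i ∈ range N, γ i) * d N := mul_nonneg (hγ N) (hd0 N)
  linarith

/-- binomial step: if `N*b ≤ a`, `0 ≤ b` then `a^p + ((N+1)^p - N^p) b^p ≤ (a+b)^p`. -/
lemma step_binom {p : ℕ} (hp : 1 ≤ p) {a b : ℝ} (hb : 0 ≤ b) (N : ℕ)
    (hab : (N : ℝ) * b ≤ a) :
    a ^ p + (((N : ℝ) + 1) ^ p - (N : ℝ) ^ p) * b ^ p ≤ (a + b) ^ p := by
  have ha : 0 ≤ a := le_trans (by positivity) hab
  have key : ∀ x : ℝ, 0 ≤ x → (x + b) ^ p = x ^ p + ∑ k ∈ range p, x ^ k * b ^ (p - k) * (p.choose k) := by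
    intro x hx
    rw [add_pow, Finset.sum_range_succ]
    simp [Nat.sub_self]
    ring
  have h1 := key a ha
  have h2 := key ((N : ℝ) * b) (by positivity)
  have hterm : ∑ k ∈ range p, ((N : ℝ) * b) ^ k * b ^ (p - k) * (p.choose k)
      ≤ ∑ k ∈ range p, a ^ k * b ^ (p - k) * (p.choose k) := by
    refine Finset.sum_le_sum fun k _ => ?_
    have := pow_le_pow_left₀ (by positivity : (0:ℝ) ≤ (N : ℝ) * b) hab k
    have hnn : (0:ℝ) ≤ b ^ (p - k) * (p.choose k) := by positivity
    calc ((N : ℝ) * b) ^ k * b ^ (p - k) * (p.choose k)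
        = ((N : ℝ) * b) ^ k * (b ^ (p - k) * (p.choose k)) := by ring
      _ ≤ a ^ k * (b ^ (p - k) * (p.choose k)) := mul_le_mul_of_nonneg_right this hnn
      _ = a ^ k * b ^ (p - k) * (p.choose k) := by ring
  have hNb : ((N : ℝ) * b + b) ^ p = ((N : ℝ) + 1) ^ p * b ^ p := by
    rw [← mul_pow]; ring_nf
  have hNb2 : ((N : ℝ) * b) ^ p = (N : ℝ) ^ p * b ^ p := by rw [mul_pow]
  nlinarith [h1, h2, hterm]

/-- pointwise lower bound for `(∑ c)^p` -/
lemma stepA {p : ℕ} (hp : 1 ≤ p) (c : ℕ → ℝ) (hc : ∀ k, 0 ≤ c k) (hmono : Antitone c) :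
    ∀ n : ℕ, ∑ m ∈ range (n + 1), (((m : ℝ) + 1) ^ p - (m : ℝ) ^ p) * c m ^ p
      ≤ (∑ k ∈ range (n + 1), c k) ^ p := by
  intro n
  induction n with
  | zero =>
      rw [Finset.sum_range_one, Finset.sum_range_one]
      rw [Nat.cast_zero, zero_pow (by omega : p ≠ 0)]
      norm_num
  | succ n ih =>
      rw [Finset.sum_range_succ, Finset.sum_range_succ (f := c)]
      have hab : ((n + 1 : ℕ) : ℝ) * c (n + 1) ≤ ∑ k ∈ range (n + 1), c k := by
        have h1 : ∀ k ∈ range (n + 1), c (n + 1) ≤ c k := fun k hk =>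
          hmono (by simp at hk; omega)
        calc ((n + 1 : ℕ) : ℝ) * c (n + 1)
            = ∑ _k ∈ range (n + 1), c (n + 1) := by
              rw [Finset.sum_const, Finset.card_range, nsmul_eq_mul]
          _ ≤ ∑ k ∈ range (n + 1), c k := Finset.sum_le_sum h1
      have h2 := step_binom hp (hc (n + 1)) (n + 1) hab
      push_cast at h2 ⊢
      linarith [ih]



noncomputable def rr (p : ℕ) (c : ℕ → ℝ) (n : ℕ) : ℝ :=
  ((∑ k ∈ range (n + 1), c k) / ((n : ℝ) + 1)) ^ p

lemma rr_nonneg {p : ℕ} {c : ℕ → ℝ} (hc : ∀ k, 0 ≤ c k) (n : ℕ) : 0 ≤ rr p c n :=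
  pow_nonneg (div_nonneg (Finset.sum_nonneg fun k _ => hc k) (by positivity)) p

lemma pow_add_le {p : ℕ} {x y : ℝ} (hx : 0 ≤ x) (hy : 0 ≤ y) :
    (x + y) ^ p ≤ 2 ^ p * (x ^ p + y ^ p) := by
  have h2 : (0:ℝ) ≤ 2 ^ p := by positivity
  rcases le_total x y with h | h
  · calc (x + y) ^ p ≤ (2 * y) ^ p := pow_le_pow_left₀ (by linarith) (by linarith) p
      _ = 2 ^ p * y ^ p := mul_pow 2 y p
      _ ≤ 2 ^ p * (x ^ p + y ^ p) := by nlinarith [pow_nonneg hx p]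
  · calc (x + y) ^ p ≤ (2 * x) ^ p := pow_le_pow_left₀ (by linarith) (by linarith) p
      _ = 2 ^ p * x ^ p := mul_pow 2 x p
      _ ≤ 2 ^ p * (x ^ p + y ^ p) := by nlinarith [pow_nonneg hy p]

lemma fiber_le (g : ℕ → ℝ) (hg : ∀ m, 0 ≤ g m) (N : ℕ) (s : Finset ℕ) (φ : ℕ → ℕ)
    (hφ : ∀ n ∈ s, φ n < N)
    (hinj : Set.InjOn (fun n => (φ n, (n + 1) % 5)) ↑s) :
    ∑ n ∈ s, g (φ n) ≤ 5 * ∑ m ∈ range N, g m := by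
  classical
  set ψ : ℕ → ℕ × ℕ := fun n => (φ n, (n + 1) % 5) with hψ
  have h1 : ∑ x ∈ s.image ψ, g x.1 = ∑ n ∈ s, g (ψ n).1 :=
    Finset.sum_image fun x hx y hy h => hinj hx hy h
  have hsub : s.image ψ ⊆ range N ×ˢ range 5 := by
    intro x hx
    rcases Finset.mem_image.mp hx with ⟨n, hn, rfl⟩
    refine Finset.mem_product.mpr ⟨Finset.mem_range.mpr (hφ n hn), Finset.mem_range.mpr ?_⟩
    exact Nat.mod_lt _ (by norm_num)
  have h2 : ∑ x ∈ s.image ψ, g x.1 ≤ ∑ x ∈ range N ×ˢ range 5, g x.1 :=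
    Finset.sum_le_sum_of_subset_of_nonneg hsub fun x _ _ => hg x.1
  have h3 : ∑ x ∈ range N ×ˢ range 5, g x.1 = 5 * ∑ m ∈ range N, g m := by
    rw [Finset.sum_product, Finset.mul_sum]
    refine Finset.sum_congr rfl fun m _ => ?_
    show ∑ _y ∈ range 5, g m = 5 * g m
    rw [Finset.sum_const, Finset.card_range, nsmul_eq_mul]
    norm_num
  calc ∑ n ∈ s, g (φ n) = ∑ x ∈ s.image ψ, g x.1 := h1.symm
    _ ≤ ∑ x ∈ range N ×ˢ range 5, g x.1 := h2
    _ = 5 * ∑ m ∈ range N, g m := h3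

lemma H2 {p : ℕ} (hp : 2 ≤ p) {c : ℕ → ℝ} (hc : ∀ k, 0 ≤ c k) (hmono : Antitone c)
    {n : ℕ} (hn : 4 ≤ n) :
    rr p c n ≤ 2 ^ p * ((1 / (5:ℝ) ^ p) * rr p c ((n + 1) / 5 - 1) + c ((n + 1) / 5) ^ p) := by
  set m' := (n + 1) / 5 with hm'
  have hm1 : 1 ≤ m' := by omega
  have h5m : 5 * m' ≤ n + 1 := by omega
  have hm'n : m' ≤ n := by omega
  set A := ∑ k ∈ range m', c k with hA
  have hAnn : 0 ≤ A := Finset.sum_nonneg fun k _ => hc k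
  have hB : (0:ℝ) < (n : ℝ) + 1 := by positivity
  have hm'pos : (0:ℝ) < (m' : ℝ) := by exact_mod_cast hm1
  have h5mpos : (0:ℝ) < 5 * (m' : ℝ) := by nlinarith [hm'pos]
  have h5R : (5:ℝ) * (m' : ℝ) ≤ (n : ℝ) + 1 := by
    exact_mod_cast h5m
  have hSnn : (0:ℝ) ≤ ∑ k ∈ range (n + 1), c k := Finset.sum_nonneg fun k _ => hc k
  have hsplit : ∑ k ∈ range (n + 1), c k = A + ∑ i ∈ range (n + 1 - m'), c (m' + i) := by
    rw [hA, show n + 1 = m' + (n + 1 - m') by omega, Finset.sum_range_add]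
    rw [show m' + (n + 1 - m') - m' = n + 1 - m' by omega]
  have htail : ∑ i ∈ range (n + 1 - m'), c (m' + i) ≤ ((n:ℝ) + 1) * c m' := by
    calc ∑ i ∈ range (n + 1 - m'), c (m' + i) ≤ ∑ _i ∈ range (n + 1 - m'), c m' :=
          Finset.sum_le_sum fun i _ => hmono (Nat.le_add_right m' i)
      _ = ((n + 1 - m' : ℕ) : ℝ) * c m' := by
          rw [Finset.sum_const, Finset.card_range, nsmul_eq_mul]
      _ ≤ ((n:ℝ) + 1) * c m' := by
          refine mul_le_mul_of_nonneg_right ?_ (hc m')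
          have h : (n + 1 - m' : ℕ) ≤ n + 1 := by omega
          exact_mod_cast h
  have hS : ∑ k ∈ range (n + 1), c k ≤ A + ((n:ℝ) + 1) * c m' := by
    rw [hsplit]; linarith
  have step1 : rr p c n ≤ (A / ((n:ℝ) + 1) + c m') ^ p := by
    show ((∑ k ∈ range (n + 1), c k) / ((n : ℝ) + 1)) ^ p ≤ _
    refine pow_le_pow_left₀ (div_nonneg hSnn hB.le) ?_ p
    calc (∑ k ∈ range (n + 1), c k) / ((n:ℝ) + 1)
        ≤ (A + ((n:ℝ) + 1) * c m') / ((n:ℝ) + 1) := by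
          apply div_le_div_of_nonneg_right hS hB.le
      _ = A / ((n:ℝ) + 1) + c m' := by
          rw [add_div, mul_div_cancel_left₀ _ (ne_of_gt hB)]
  have hdiv2 : A / ((n:ℝ) + 1) ≤ A / (5 * (m' : ℝ)) := by
    rw [div_le_div_iff₀ hB h5mpos]
    nlinarith [hAnn, h5R]
  have step6 : rr p c (m' - 1) = (A / (m' : ℝ)) ^ p := by
    have hr1 : m' - 1 + 1 = m' := by omega
    have hr2 : ((m' - 1 : ℕ) : ℝ) + 1 = (m' : ℝ) := by
      rw [Nat.cast_sub hm1, Nat.cast_one]; ring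
    show ((∑ k ∈ range (m' - 1 + 1), c k) / (((m' - 1 : ℕ) : ℝ) + 1)) ^ p = _
    rw [hr1, hr2, hA]
  have step5 : (A / (5 * (m' : ℝ))) ^ p = (1 / (5:ℝ) ^ p) * rr p c (m' - 1) := by
    rw [step6, div_pow, div_pow, mul_pow]
    ring
  calc rr p c n ≤ (A / ((n:ℝ) + 1) + c m') ^ p := step1
    _ ≤ 2 ^ p * ((A / ((n:ℝ) + 1)) ^ p + c m' ^ p) :=
        pow_add_le (div_nonneg hAnn hB.le) (hc m')
    _ ≤ 2 ^ p * ((A / (5 * (m' : ℝ))) ^ p + c m' ^ p) := by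
        have h := pow_le_pow_left₀ (div_nonneg hAnn hB.le) hdiv2 p
        have h2 : (0:ℝ) ≤ 2 ^ p := by positivity
        nlinarith [h]
    _ = 2 ^ p * ((1 / (5:ℝ) ^ p) * rr p c (m' - 1) + c m' ^ p) := by rw [step5]

lemma r_summable {p : ℕ} (hp : 2 ≤ p) {c : ℕ → ℝ} (hc : ∀ k, 0 ≤ c k) (hmono : Antitone c)
    (hsum : Summable fun k => c k ^ p) : Summable (rr p c) := by
  classical
  set C := ∑' k, c k ^ p with hC
  have hCnn : ∀ N, ∑ m ∈ range N, c m ^ p ≤ C :=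
    fun N => Summable.sum_le_tsum _ (fun i _ => pow_nonneg (hc i) p) hsum
  set B1 := (∑ k ∈ range 4, c k) ^ p with hB1
  have hB1nn : 0 ≤ B1 := pow_nonneg (Finset.sum_nonneg fun k _ => hc k) p
  have hq : (2:ℝ) ^ p * (1 / (5:ℝ) ^ p) * 5 ≤ 4 / 5 := by
    have h1 : ((2:ℝ)/5) ^ p ≤ ((2:ℝ)/5) ^ 2 :=
      pow_le_pow_of_le_one (by norm_num) (by norm_num) hp
    have h2 : (2:ℝ) ^ p * (1 / (5:ℝ) ^ p) * 5 = 5 * ((2:ℝ)/5) ^ p := by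
      rw [div_pow]; field_simp
    rw [h2]; nlinarith [h1]
  have hbound : ∀ N, ∑ n ∈ range N, rr p c n ≤ 5 * (4 * B1 + 5 * 2 ^ p * C) := by
    intro N
    have hANnn : 0 ≤ ∑ n ∈ range N, rr p c n :=
      Finset.sum_nonneg fun n _ => rr_nonneg hc n
    have hsplit := Finset.sum_filter_add_sum_filter_not (range N) (fun n => n < 4) (rr p c)
    have hsmall : ∑ n ∈ (range N).filter (fun n => n < 4), rr p c n ≤ 4 * B1 := by
      have hle : ∀ n ∈ (range N).filter (fun n => n < 4), rr p c n ≤ B1 := by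
        intro n hn
        have hn4 : n < 4 := (Finset.mem_filter.mp hn).2
        have hSnn : (0:ℝ) ≤ ∑ k ∈ range (n + 1), c k :=
          Finset.sum_nonneg fun k _ => hc k
        have h1 : (∑ k ∈ range (n + 1), c k) / ((n:ℝ) + 1) ≤ ∑ k ∈ range (n + 1), c k := by
          apply div_le_self hSnn
          have : (0:ℝ) ≤ (n:ℝ) := Nat.cast_nonneg n
          linarith
        have h2 : (∑ k ∈ range (n + 1), c k) ≤ ∑ k ∈ range 4, c k :=
          Finset.sum_le_sum_of_subset_of_nonneg
            (by intro x hx; simp only [Finset.mem_range] at hx ⊢; omega)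
            (fun k _ _ => hc k)
        calc rr p c n = ((∑ k ∈ range (n + 1), c k) / ((n:ℝ) + 1)) ^ p := rfl
          _ ≤ (∑ k ∈ range 4, c k) ^ p :=
              pow_le_pow_left₀ (div_nonneg hSnn (by positivity)) (h1.trans h2) p
      calc ∑ n ∈ (range N).filter (fun n => n < 4), rr p c n
          ≤ ((range N).filter (fun n => n < 4)).card • B1 :=
            Finset.sum_le_card_nsmul _ _ _ hle
        _ ≤ 4 * B1 := by
            have hcard : ((range N).filter (fun n => n < 4)).card ≤ 4 := by
              have hss : (range N).filter (fun n => n < 4) ⊆ range 4 := by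
                intro x hx
                simp only [Finset.mem_filter, Finset.mem_range] at hx ⊢
                omega
              simpa using Finset.card_le_card hss
            rw [nsmul_eq_mul]
            have hcc : ((((range N).filter (fun n => n < 4)).card : ℕ) : ℝ) ≤ 4 := by
              exact_mod_cast hcard
            nlinarith [hB1nn]
    set s := (range N).filter (fun n => ¬ n < 4) with hs
    have h4le : ∀ n ∈ s, 4 ≤ n := by
      intro n hn
      have := (Finset.mem_filter.mp hn).2
      omega
    have hsubN : ∀ n ∈ s, n < N := fun n hn => Finset.mem_range.mp (Finset.mem_filter.mp hn).1
    have hstep : ∑ n ∈ s, rr p c n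
        ≤ ∑ n ∈ s, 2 ^ p * ((1 / (5:ℝ) ^ p) * rr p c ((n + 1) / 5 - 1) + c ((n + 1) / 5) ^ p) :=
      Finset.sum_le_sum fun n hn => H2 hp hc hmono (h4le n hn)
    have hdistr : ∑ n ∈ s, 2 ^ p * ((1 / (5:ℝ) ^ p) * rr p c ((n + 1) / 5 - 1) + c ((n + 1) / 5) ^ p)
        = 2 ^ p * (1 / (5:ℝ) ^ p) * ∑ n ∈ s, rr p c ((n + 1) / 5 - 1)
          + 2 ^ p * ∑ n ∈ s, c ((n + 1) / 5) ^ p := by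
      rw [Finset.mul_sum, Finset.mul_sum, ← Finset.sum_add_distrib]
      refine Finset.sum_congr rfl fun n _ => by ring
    have hf1 : ∑ n ∈ s, rr p c ((n + 1) / 5 - 1) ≤ 5 * ∑ n ∈ range N, rr p c n := by
      refine fiber_le (rr p c) (rr_nonneg hc) N s (fun n => (n + 1) / 5 - 1) ?_ ?_
      · intro n hn
        have := hsubN n hn
        show (n + 1) / 5 - 1 < N
        omega
      · intro a ha b hb hab
        simp only [Prod.mk.injEq] at hab
        have h4a := h4le a (Finset.mem_coe.mp ha)
        have h4b := h4le b (Finset.mem_coe.mp hb)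
        omega
    have hf2 : ∑ n ∈ s, c ((n + 1) / 5) ^ p ≤ 5 * ∑ m ∈ range N, c m ^ p := by
      refine fiber_le (fun m => c m ^ p) (fun m => pow_nonneg (hc m) p) N s (fun n => (n + 1) / 5) ?_ ?_
      · intro n hn
        have := hsubN n hn
        show (n + 1) / 5 < N
        omega
      · intro a ha b hb hab
        simp only [Prod.mk.injEq] at hab
        omega
    have hf2' : ∑ n ∈ s, c ((n + 1) / 5) ^ p ≤ 5 * C := by
      refine hf2.trans ?_
      nlinarith [hCnn N]
    have h2nn : (0:ℝ) ≤ 2 ^ p * (1 / (5:ℝ) ^ p) := by positivity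
    have h2pn : (0:ℝ) ≤ 2 ^ p := by positivity
    have t1 : 2 ^ p * (1 / (5:ℝ) ^ p) * ∑ n ∈ s, rr p c ((n + 1) / 5 - 1)
        ≤ 2 ^ p * (1 / (5:ℝ) ^ p) * (5 * ∑ n ∈ range N, rr p c n) :=
      mul_le_mul_of_nonneg_left hf1 h2nn
    have t2 : 2 ^ p * ∑ n ∈ s, c ((n + 1) / 5) ^ p ≤ 2 ^ p * (5 * C) :=
      mul_le_mul_of_nonneg_left hf2' h2pn
    have t3 : 2 ^ p * (1 / (5:ℝ) ^ p) * (5 * ∑ n ∈ range N, rr p c n)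
        ≤ 4 / 5 * ∑ n ∈ range N, rr p c n := by
      nlinarith [mul_le_mul_of_nonneg_right hq hANnn]
    linarith [hsplit, hsmall, hstep, hdistr, t1, t2, t3]
  exact summable_of_sum_range_le (rr_nonneg hc) hbound


end DRH

/-- Discrete reverse Hardy inequality with sharp constant `ζ(p)`, for integer
exponents `p ≥ 2`; here `c k` denotes the `(k+1)`-st term of the nonincreasing
nonnegative sequence, and `ζ(p) = ∑_{k ≥ 1} k^{-p}`. -/

theorem discrete_reverse_hardy (p : ℕ) (hp : 2 ≤ p) (c : ℕ → ℝ)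
    (hc : ∀ k, 0 ≤ c k) (hmono : Antitone c)
    (hsum : Summable (fun k => c k ^ p)) :
    (∑' k : ℕ, 1 / ((k : ℝ) + 1) ^ p) * ∑' k : ℕ, c k ^ p
      ≤ ∑' n : ℕ, ((∑ k ∈ Finset.range (n + 1), c k) / (n + 1 : ℝ)) ^ p := by
  classical
  have hr : Summable (DRH.rr p c) := DRH.r_summable hp hc hmono hsum
  have hL : (∑' k : ℕ, 1 / ((k : ℝ) + 1) ^ p) = DRH.zt p 0 :=
    (tsum_congr fun n => by rw [if_pos (Nat.zero_le n)]).symm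
  have hRHS : (∑' n : ℕ, ((∑ k ∈ Finset.range (n + 1), c k) / (n + 1 : ℝ)) ^ p)
      = ∑' n : ℕ, DRH.rr p c n := rfl
  rw [hL, hRHS]
  -- key partial-sum estimate
  have key : ∀ M : ℕ, DRH.zt p 0 * ∑ m ∈ Finset.range M, c m ^ p ≤ ∑' n, DRH.rr p c n := by
    intro M
    rcases Nat.eq_zero_or_pos M with hM | hM
    · subst hM
      simp only [Finset.range_zero, Finset.sum_empty, mul_zero]
      exact tsum_nonneg fun n => DRH.rr_nonneg hc n
    obtain ⟨l, rfl⟩ : ∃ l, M = l + 1 := ⟨M - 1, by omega⟩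
    -- Abel step
    have hd : ∀ m, c (m + 1) ^ p ≤ c m ^ p :=
      fun m => pow_le_pow_left₀ (hc (m + 1)) (hmono (Nat.le_succ m)) p
    have hγ : ∀ N : ℕ, 0 ≤ ∑ m ∈ Finset.range N,
        ((((m : ℝ) + 1) ^ p - (m : ℝ) ^ p) * DRH.zt p m - DRH.zt p 0) := by
      intro N
      rcases Nat.eq_zero_or_pos N with h0 | h0
      · subst h0; simp
      obtain ⟨l', rfl⟩ : ∃ l', N = l' + 1 := ⟨N - 1, by omega⟩
      rw [Finset.sum_sub_distrib, Finset.sum_const, Finset.card_range, nsmul_eq_mul]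
      have := DRH.prefixD hp l'
      have hcast : ((l' + 1 : ℕ) : ℝ) = (l' : ℝ) + 1 := by push_cast; ring
      rw [hcast]
      linarith
    have habel := DRH.abel_nonneg
      (fun m => (((m : ℝ) + 1) ^ p - (m : ℝ) ^ p) * DRH.zt p m - DRH.zt p 0)
      (fun m => c m ^ p) hd (fun m => pow_nonneg (hc m) p) hγ (l + 1)
    have hstep1 : DRH.zt p 0 * ∑ m ∈ Finset.range (l + 1), c m ^ p
        ≤ ∑ m ∈ Finset.range (l + 1),
            ((((m : ℝ) + 1) ^ p - (m : ℝ) ^ p) * DRH.zt p m) * c m ^ p := by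
      have hexp : ∑ m ∈ Finset.range (l + 1),
          ((((m : ℝ) + 1) ^ p - (m : ℝ) ^ p) * DRH.zt p m - DRH.zt p 0) * c m ^ p
          = ∑ m ∈ Finset.range (l + 1),
              ((((m : ℝ) + 1) ^ p - (m : ℝ) ^ p) * DRH.zt p m) * c m ^ p
            - ∑ m ∈ Finset.range (l + 1), DRH.zt p 0 * c m ^ p := by
        rw [← Finset.sum_sub_distrib]
        exact Finset.sum_congr rfl fun m _ => by ring
      rw [Finset.mul_sum]
      have := habel
      rw [hexp] at this
      linarith
    -- swap step
    set F : ℕ → ℕ → ℝ := fun m n =>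
      if m ≤ n then ((((m : ℝ) + 1) ^ p - (m : ℝ) ^ p) * c m ^ p) * (1 / ((n : ℝ) + 1) ^ p) else 0
      with hF
    have hFs : ∀ m, Summable (F m) := by
      intro m
      have h1 := (DRH.summable_zt_term hp m).mul_left
        ((((m : ℝ) + 1) ^ p - (m : ℝ) ^ p) * c m ^ p)
      refine h1.congr fun n => ?_
      rw [mul_ite, mul_zero]
    have hterm : ∀ m : ℕ, ((((m : ℝ) + 1) ^ p - (m : ℝ) ^ p) * DRH.zt p m) * c m ^ p
        = ∑' n, F m n := by
      intro m
      calc ((((m : ℝ) + 1) ^ p - (m : ℝ) ^ p) * DRH.zt p m) * c m ^ p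
          = ((((m : ℝ) + 1) ^ p - (m : ℝ) ^ p) * c m ^ p) * DRH.zt p m := by ring
        _ = ∑' n, ((((m : ℝ) + 1) ^ p - (m : ℝ) ^ p) * c m ^ p)
              * (if m ≤ n then 1 / ((n : ℝ) + 1) ^ p else 0) := by
            rw [tsum_mul_left]; rfl
        _ = ∑' n, F m n := tsum_congr fun n => by rw [mul_ite, mul_zero]
    have hswap : ∑ m ∈ Finset.range (l + 1),
        ((((m : ℝ) + 1) ^ p - (m : ℝ) ^ p) * DRH.zt p m) * c m ^ p
        = ∑' n, ∑ m ∈ Finset.range (l + 1), F m n := by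
      rw [Summable.tsum_finsetSum fun m _ => hFs m]
      exact Finset.sum_congr rfl fun m _ => hterm m
    -- pointwise comparison with rr
    have hAnn : ∀ m : ℕ, (0:ℝ) ≤ ((m : ℝ) + 1) ^ p - (m : ℝ) ^ p := by
      intro m
      have := pow_le_pow_left₀ (Nat.cast_nonneg m : (0:ℝ) ≤ m) (by linarith : (m:ℝ) ≤ (m:ℝ) + 1) p
      linarith
    have hpt : ∀ n : ℕ, ∑ m ∈ Finset.range (l + 1), F m n ≤ DRH.rr p c n := by
      intro n
      have h1 : ∑ m ∈ Finset.range (l + 1), F m n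
          = ∑ m ∈ (Finset.range (l + 1)).filter (fun m => m ≤ n),
              ((((m : ℝ) + 1) ^ p - (m : ℝ) ^ p) * c m ^ p) * (1 / ((n : ℝ) + 1) ^ p) :=
        (Finset.sum_filter _ _).symm
      have h2 : ∑ m ∈ (Finset.range (l + 1)).filter (fun m => m ≤ n),
            ((((m : ℝ) + 1) ^ p - (m : ℝ) ^ p) * c m ^ p) * (1 / ((n : ℝ) + 1) ^ p)
          ≤ ∑ m ∈ Finset.range (n + 1),
              ((((m : ℝ) + 1) ^ p - (m : ℝ) ^ p) * c m ^ p) * (1 / ((n : ℝ) + 1) ^ p) := by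
        refine Finset.sum_le_sum_of_subset_of_nonneg ?_ fun m _ _ => ?_
        · intro m hm
          simp only [Finset.mem_filter, Finset.mem_range] at hm ⊢
          omega
        · have := hAnn m
          have h3 : (0:ℝ) ≤ c m ^ p := pow_nonneg (hc m) p
          positivity
      have h4 : ∑ m ∈ Finset.range (n + 1),
            ((((m : ℝ) + 1) ^ p - (m : ℝ) ^ p) * c m ^ p) * (1 / ((n : ℝ) + 1) ^ p)
          = (∑ m ∈ Finset.range (n + 1),
              (((m : ℝ) + 1) ^ p - (m : ℝ) ^ p) * c m ^ p) * (1 / ((n : ℝ) + 1) ^ p) :=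
        (Finset.sum_mul _ _ _).symm
      have h5 := DRH.stepA (by omega : 1 ≤ p) c hc hmono n
      have h6 : (∑ m ∈ Finset.range (n + 1),
            (((m : ℝ) + 1) ^ p - (m : ℝ) ^ p) * c m ^ p) * (1 / ((n : ℝ) + 1) ^ p)
          ≤ (∑ k ∈ Finset.range (n + 1), c k) ^ p * (1 / ((n : ℝ) + 1) ^ p) :=
        mul_le_mul_of_nonneg_right h5 (by positivity)
      have h7 : (∑ k ∈ Finset.range (n + 1), c k) ^ p * (1 / ((n : ℝ) + 1) ^ p)
          = DRH.rr p c n := by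
        show _ = ((∑ k ∈ Finset.range (n + 1), c k) / ((n : ℝ) + 1)) ^ p
        rw [div_pow]
        ring
      rw [h1]
      calc _ ≤ _ := h2
        _ = _ := h4
        _ ≤ _ := h6
        _ = _ := h7
    have hsum2 : Summable fun n => ∑ m ∈ Finset.range (l + 1), F m n :=
      summable_sum fun m _ => hFs m
    have hstep2 : ∑' n, ∑ m ∈ Finset.range (l + 1), F m n ≤ ∑' n, DRH.rr p c n :=
      Summable.tsum_le_tsum hpt hsum2 hr
    calc DRH.zt p 0 * ∑ m ∈ Finset.range (l + 1), c m ^ p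
        ≤ ∑ m ∈ Finset.range (l + 1),
            ((((m : ℝ) + 1) ^ p - (m : ℝ) ^ p) * DRH.zt p m) * c m ^ p := hstep1
      _ = ∑' n, ∑ m ∈ Finset.range (l + 1), F m n := hswap
      _ ≤ ∑' n, DRH.rr p c n := hstep2
  -- pass to the limit
  have hts : Filter.Tendsto (fun N => ∑ m ∈ Finset.range N, c m ^ p)
      Filter.atTop (nhds (∑' k, c k ^ p)) := hsum.hasSum.tendsto_sum_nat
  have h2 : Filter.Tendsto (fun N => DRH.zt p 0 * ∑ m ∈ Finset.range N, c m ^ p)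
      Filter.atTop (nhds (DRH.zt p 0 * ∑' k, c k ^ p)) := hts.const_mul _
  exact le_of_tendsto h2 (Filter.Eventually.of_forall key)
end

section
/- For every integer $n\ge 1$ and real $p>1$, $\big(n^p-(n-1)^p\big)\sum_{k=n}^\infty \frac{1}{k^p} \ge \zeta(p)$ when $n\ge 2$, with equality when $n=1$. -/
/-!
Write `Q(y) = ratioSum p y = ∑_{m ≥ 1} (y / (y + m)) ^ p`. Splitting off the first term of the
series gives `(n^p - (n-1)^p) ∑_{k ≥ n} k^{-p} = 1 + Q(n) - Q(n-1)` and `ζ(p) = 1 + Q(1)`, so the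
inequality is the superadditivity `Q(1) + Q(n-1) ≤ Q(n)`. Expanding `(e^{t/y} - 1)⁻¹` as a
geometric series and integrating term by term against `t^{p-1} e^{-t}` gives
`Γ(p) Q(y) = ∫₀^∞ t^{p-1} e^{-t} (e^{t/y} - 1)⁻¹ dt`, and `y ↦ (e^{t/y} - 1)⁻¹` is superadditive
because `((e^{t/y} - 1) y)⁻¹` increases with `y`, i.e. `(e^s - 1)/s` increases with `s` by
convexity of `exp`.
-/

open Real MeasureTheory Set

namespace Renaud

noncomputable def ratioSum (p y : ℝ) : ℝ := ∑' m : ℕ, (y / (y + (m + 1))) ^ p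

lemma summable_add_nat_rpow_neg {p x : ℝ} (hp : 1 < p) (hx : 0 < x) :
    Summable fun k : ℕ => (x + k) ^ (-p) := by
  refine ((summable_one_div_nat_add_rpow x p).mpr hp).congr fun k => ?_
  rw [add_comm, abs_of_pos (by positivity), one_div, rpow_neg (by positivity)]

lemma div_rpow_eq_rpow_mul_rpow_neg {a b : ℝ} (p : ℝ) (ha : 0 ≤ a) (hb : 0 < b) :
    (a / b) ^ p = a ^ p * b ^ (-p) := by
  rw [div_rpow ha hb.le, rpow_neg hb.le, div_eq_mul_inv]

lemma ratioSum_eq_rpow_mul_tsum (p : ℝ) {y : ℝ} (hy : 0 ≤ y) :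
    ratioSum p y = y ^ p * ∑' k : ℕ, (y + 1 + k) ^ (-p) := by
  rw [ratioSum, ← tsum_mul_left]
  refine tsum_congr fun k => ?_
  rw [div_rpow_eq_rpow_mul_rpow_neg p hy (by positivity), ← add_assoc, add_right_comm]

lemma summable_div_add_nat_succ_rpow {p y : ℝ} (hp : 1 < p) (hy : 0 ≤ y) :
    Summable fun m : ℕ => (y / (y + (m + 1))) ^ p := by
  refine ((summable_add_nat_rpow_neg hp (by positivity : 0 < y + 1)).mul_left (y ^ p)).congr
    fun m => ?_
  rw [div_rpow_eq_rpow_mul_rpow_neg p hy (by positivity), ← add_assoc, add_right_comm]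

lemma rpow_mul_tsum_add_nat_rpow_neg {p x : ℝ} (hp : 1 < p) (hx : 0 < x) :
    x ^ p * ∑' k : ℕ, (x + k) ^ (-p) = 1 + ratioSum p x := by
  rw [(summable_add_nat_rpow_neg hp hx).tsum_eq_zero_add, ratioSum_eq_rpow_mul_tsum p hx.le,
    mul_add, Nat.cast_zero, add_zero, ← rpow_add hx, add_neg_cancel, rpow_zero]
  simp only [Nat.cast_add, Nat.cast_one, add_assoc, add_comm (1 : ℝ)]

lemma tsum_nat_add_one_rpow_neg {p : ℝ} (hp : 1 < p) :
    ∑' k : ℕ, ((k : ℝ) + 1) ^ (-p) = 1 + ratioSum p 1 := by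
  rw [← rpow_mul_tsum_add_nat_rpow_neg hp one_pos, one_rpow, one_mul]
  simp only [add_comm (1 : ℝ)]

lemma sub_rpow_mul_tsum_add_nat_rpow_neg {p x : ℝ} (hp : 1 < p) (hx : 1 ≤ x) :
    (x ^ p - (x - 1) ^ p) * ∑' k : ℕ, (x + k) ^ (-p)
      = 1 + ratioSum p x - ratioSum p (x - 1) := by
  rw [sub_mul, rpow_mul_tsum_add_nat_rpow_neg hp (by linarith),
    ratioSum_eq_rpow_mul_tsum p (y := x - 1) (by linarith), sub_add_cancel]

lemma add_le_of_monotoneOn_div {𝕜 : Type*} [Field 𝕜] [LinearOrder 𝕜] [IsStrictOrderedRing 𝕜]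
    {f : 𝕜 → 𝕜} (hf : MonotoneOn (fun y => f y / y) (Ioi 0)) {a b : 𝕜} (ha : 0 < a)
    (hb : 0 < b) : f a + f b ≤ f (a + b) := by
  have hab : 0 < a + b := add_pos ha hb
  have hfa : f a / a ≤ f (a + b) / (a + b) := hf ha hab (by linarith)
  have hfb : f b / b ≤ f (a + b) / (a + b) := hf hb hab (by linarith)
  rw [div_le_div_iff₀ ha hab] at hfa
  rw [div_le_div_iff₀ hb hab] at hfb
  nlinarith

lemma monotoneOn_exp_sub_one_div : MonotoneOn (fun s => (exp s - 1) / s) (Ioi 0) := by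
  intro u hu v hv huv
  simpa using convexOn_exp.secant_mono (mem_univ 0) (mem_univ u) (mem_univ v)
    (ne_of_gt hu) (ne_of_gt hv) huv

lemma monotoneOn_inv_exp_div_sub_one_div {t : ℝ} (ht : 0 < t) :
    MonotoneOn (fun y => (exp (t / y) - 1)⁻¹ / y) (Ioi 0) := by
  intro a (ha : 0 < a) b (hb : 0 < b) hab
  have hsecant := monotoneOn_exp_sub_one_div (show 0 < t / b by positivity)
    (show 0 < t / a by positivity) (div_le_div_of_nonneg_left ht.le ha hab)
  have heb : 0 < exp (t / b) - 1 := sub_pos.2 (one_lt_exp_iff.2 (div_pos ht hb))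
  simp only [div_div_eq_mul_div, div_le_div_iff₀ (by positivity : 0 < t) ht] at hsecant
  simp only [inv_div_left]
  exact inv_anti₀ (by positivity) (by nlinarith)

lemma inv_exp_div_sub_one_add_le {t a b : ℝ} (ht : 0 < t) (ha : 0 < a) (hb : 0 < b) :
    (exp (t / a) - 1)⁻¹ + (exp (t / b) - 1)⁻¹ ≤ (exp (t / (a + b)) - 1)⁻¹ :=
  add_le_of_monotoneOn_div (f := fun y => (exp (t / y) - 1)⁻¹)
    (monotoneOn_inv_exp_div_sub_one_div ht) ha hb

lemma hasSum_exp_neg_nat_succ_mul {s : ℝ} (hs : 0 < s) :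
    HasSum (fun m : ℕ => exp (-((m + 1) * s))) (exp s - 1)⁻¹ := by
  have hr : exp (-s) < 1 := exp_lt_one_iff.2 (neg_neg_of_pos hs)
  have hterm (m : ℕ) : exp (-s) * exp (-s) ^ m = exp (-((m + 1) * s)) := by
    rw [← exp_nat_mul, ← exp_add]
    ring_nf
  have hsum : exp (-s) * (1 - exp (-s))⁻¹ = (exp s - 1)⁻¹ := by
    have : exp s - 1 ≠ 0 := (sub_pos.2 (one_lt_exp_iff.2 hs)).ne'
    rw [exp_neg]
    field_simp
  simpa only [hterm, hsum] using
    (hasSum_geometric_of_lt_one (exp_pos (-s)).le hr).mul_left (exp (-s))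

lemma inv_exp_sub_one_le_inv {s : ℝ} (hs : 0 < s) : (exp s - 1)⁻¹ ≤ s⁻¹ :=
  inv_anti₀ hs (by linarith [add_one_lt_exp hs.ne'])

noncomputable def ratioSumIntegrand (p y t : ℝ) : ℝ :=
  t ^ (p - 1) * exp (-t) * (exp (t / y) - 1)⁻¹

lemma integrableOn_ratioSumIntegrand {p y : ℝ} (hp : 1 < p) (hy : 0 < y) :
    IntegrableOn (ratioSumIntegrand p y) (Ioi 0) := by
  refine ((GammaIntegral_convergent (by linarith : 0 < p - 1)).const_mul y).mono' ?_ ?_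
  · unfold ratioSumIntegrand
    fun_prop
  · filter_upwards [ae_restrict_mem measurableSet_Ioi] with t (ht : 0 < t)
    have hW := inv_exp_sub_one_le_inv (div_pos ht hy)
    have hW0 : 0 ≤ (exp (t / y) - 1)⁻¹ :=
      (inv_pos.2 (sub_pos.2 (one_lt_exp_iff.2 (div_pos ht hy)))).le
    rw [ratioSumIntegrand, norm_of_nonneg (by positivity)]
    calc t ^ (p - 1) * exp (-t) * (exp (t / y) - 1)⁻¹
        ≤ t ^ (p - 1) * exp (-t) * (t / y)⁻¹ := by gcongr
      _ = y * (exp (-t) * t ^ (p - 1 - 1)) := by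
        rw [rpow_sub_one ht.ne' (p - 1)]
        field_simp

lemma hasSum_ratioSumIntegrand {p y t : ℝ} (hy : 0 < y) (ht : 0 < t) :
    HasSum (fun m : ℕ => t ^ (p - 1) * exp (-((y + (m + 1)) / y * t)))
      (ratioSumIntegrand p y t) := by
  have hterm (m : ℕ) : t ^ (p - 1) * exp (-t) * exp (-((m + 1) * (t / y)))
      = t ^ (p - 1) * exp (-((y + (m + 1)) / y * t)) := by
    rw [mul_assoc, ← exp_add]
    congr 2
    field_simp
    ring
  have h := (hasSum_exp_neg_nat_succ_mul (div_pos ht hy)).mul_left (t ^ (p - 1) * exp (-t))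
  simp only [hterm] at h
  exact h

lemma integral_rpow_mul_exp_neg_div_mul {p y : ℝ} (hp : 0 < p) (hy : 0 < y) (m : ℕ) :
    ∫ t in Ioi 0, t ^ (p - 1) * exp (-((y + (m + 1)) / y * t))
      = Gamma p * (y / (y + (m + 1))) ^ p := by
  rw [integral_rpow_mul_exp_neg_mul_Ioi hp (by positivity), one_div_div, mul_comm]

lemma integrableOn_rpow_mul_exp_neg_mul {p c : ℝ} (hp : 0 < p) (hc : 0 < c) :
    IntegrableOn (fun t => t ^ (p - 1) * exp (-(c * t))) (Ioi 0) := by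
  simpa [rpow_one, neg_mul] using
    integrableOn_rpow_mul_exp_neg_mul_rpow (by linarith : -1 < p - 1) one_pos hc

lemma Gamma_mul_ratioSum {p y : ℝ} (hp : 1 < p) (hy : 0 < y) :
    Gamma p * ratioSum p y = ∫ t in Ioi 0, ratioSumIntegrand p y t := by
  have hp0 : 0 < p := by linarith
  have hint (m : ℕ) := integrableOn_rpow_mul_exp_neg_mul (c := (y + (m + 1)) / y) hp0
    (by positivity)
  have hsum := hasSum_integral_of_summable_integral_norm hint ?_
  · rw [← setIntegral_congr_fun measurableSet_Ioi
      fun t ht => (hasSum_ratioSumIntegrand hy ht).tsum_eq, ← hsum.tsum_eq, ratioSum,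
      ← tsum_mul_left]
    exact tsum_congr fun m => (integral_rpow_mul_exp_neg_div_mul hp0 hy m).symm
  · refine ((summable_div_add_nat_succ_rpow hp hy.le).mul_left (Gamma p)).congr fun m => ?_
    rw [← integral_rpow_mul_exp_neg_div_mul hp0 hy m]
    refine setIntegral_congr_fun measurableSet_Ioi fun t (ht : 0 < t) => ?_
    exact (norm_of_nonneg (by positivity)).symm

lemma ratioSum_add_le {p a b : ℝ} (hp : 1 < p) (ha : 0 < a) (hb : 0 < b) :
    ratioSum p a + ratioSum p b ≤ ratioSum p (a + b) := by
  have hΓ : 0 < Gamma p := Gamma_pos_of_pos (by linarith)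
  refine le_of_mul_le_mul_left ?_ hΓ
  rw [mul_add, Gamma_mul_ratioSum hp ha, Gamma_mul_ratioSum hp hb,
    Gamma_mul_ratioSum hp (add_pos ha hb), ← integral_add (integrableOn_ratioSumIntegrand hp ha)
      (integrableOn_ratioSumIntegrand hp hb)]
  refine setIntegral_mono_on ((integrableOn_ratioSumIntegrand hp ha).add
    (integrableOn_ratioSumIntegrand hp hb)) (integrableOn_ratioSumIntegrand hp (add_pos ha hb))
    measurableSet_Ioi fun t (ht : 0 < t) => ?_
  simp only [ratioSumIntegrand, ← mul_add]
  gcongr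
  exact inv_exp_div_sub_one_add_le ht ha hb

end Renaud

open Renaud

theorem renaud_lemma_general (p : ℝ) (hp : 1 < p) (n : ℕ) :
    (2 ≤ n →
      (∑' k : ℕ, ((k : ℝ) + 1) ^ (-p))
        ≤ ((n : ℝ) ^ p - ((n : ℝ) - 1) ^ p) * ∑' k : ℕ, ((n : ℝ) + k) ^ (-p))
    ∧ (n = 1 →
      ((n : ℝ) ^ p - ((n : ℝ) - 1) ^ p) * (∑' k : ℕ, ((n : ℝ) + k) ^ (-p))
        = ∑' k : ℕ, ((k : ℝ) + 1) ^ (-p)) := by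
  constructor
  · intro hn
    have hn' : (2 : ℝ) ≤ n := by exact_mod_cast hn
    have hsuper := ratioSum_add_le hp one_pos (by linarith : (0 : ℝ) < n - 1)
    rw [add_sub_cancel] at hsuper
    rw [tsum_nat_add_one_rpow_neg hp, sub_rpow_mul_tsum_add_nat_rpow_neg hp (by linarith)]
    linarith
  · rintro rfl
    simp [zero_rpow (by linarith : p ≠ 0), add_comm]

/-- Renaud's lemma: for integer `n ≥ 2` and real `p > 1`,
`(n^p - (n-1)^p) ∑_{k ≥ n} k^{-p} ≥ ζ(p)`, with equality when `n = 1`;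
here `ζ(p) = ∑_{k ≥ 1} k^{-p}`. -/
theorem renaud_lemma (p : ℝ) (hp : 1 < p) (n : ℕ) (hn : 1 ≤ n) :
    (2 ≤ n →
      (∑' k : ℕ, ((k : ℝ) + 1) ^ (-p))
        ≤ ((n : ℝ) ^ p - ((n : ℝ) - 1) ^ p) * ∑' k : ℕ, ((n : ℝ) + k) ^ (-p))
    ∧ (n = 1 →
      ((n : ℝ) ^ p - ((n : ℝ) - 1) ^ p) * (∑' k : ℕ, ((n : ℝ) + k) ^ (-p))
        = ∑' k : ℕ, ((k : ℝ) + 1) ^ (-p)) :=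
  renaud_lemma_general p hp n
end

section
/- Let $a_1,\dots,a_m$ and $p_1,\dots,p_m$ be nonnegative reals with $p_1>0$, and let $p>1$. Then $\sum_{n=1}^m\left(\sum_{i=n}^m \frac{a_i p_i}{\sum_{j=1}^i p_j}\right)^p p_n \le p^p \sum_{n=1}^m a_n^p p_n$. -/
/-!
With `W n = ∑_{j ≤ n} w j` and `T n = ∑_{i = n}^m a i w i / W i`, summation by parts turns
`∑ T n ^ p w n` into `∑ (T n ^ p - T (n + 1) ^ p) W n`. Convexity of `x ↦ x ^ p` bounds each
difference by `p T n ^ (p - 1) (T n - T (n + 1)) = p T n ^ (p - 1) a n w n / W n`, so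
`∑ T ^ p w ≤ p ∑ a T ^ (p - 1) w`. Hölder's inequality with weights `w` bounds the right-hand
side by `p (∑ a ^ p w) ^ (1 / p) (∑ T ^ p w) ^ (1 / q)`, and the factor `∑ T ^ p w` is
absorbed into the left-hand side.
-/

open Finset

theorem Finset.sum_Icc_one_by_parts {R : Type*} [CommRing R] (f w : ℕ → R) (m : ℕ) :
    ∑ n ∈ Icc 1 m, f n * w n =
      ∑ n ∈ Icc 1 m, (f n - f (n + 1)) * ∑ j ∈ Icc 1 n, w j +
        f (m + 1) * ∑ j ∈ Icc 1 m, w j := by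
  induction m with
  | zero => simp
  | succ k ih =>
    simp only [sum_Icc_succ_top (Nat.le_add_left 1 k), ih]
    ring

namespace Real

theorem rpow_sub_rpow_le_mul_rpow_sub_one_mul_sub {p x y : ℝ} (hp : 1 ≤ p) (hy : 0 ≤ y)
    (hyx : y ≤ x) : x ^ p - y ^ p ≤ p * x ^ (p - 1) * (x - y) := by
  rcases hyx.eq_or_lt with rfl | hlt
  · simp
  have hslope := (convexOn_rpow hp).slope_le_of_hasDerivAt hy (hy.trans hlt.le) hlt
    (hasDerivAt_rpow_const (Or.inr hp))
  rwa [slope_def_field, div_le_iff₀ (sub_pos.2 hlt)] at hslope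

theorem inner_le_weighted_Lp_mul_Lq_of_nonneg {ι : Type*} (s : Finset ι) {p q : ℝ}
    (hpq : p.HolderConjugate q) {f g w : ι → ℝ} (hf : ∀ i ∈ s, 0 ≤ f i)
    (hg : ∀ i ∈ s, 0 ≤ g i) (hw : ∀ i ∈ s, 0 ≤ w i) :
    ∑ i ∈ s, f i * g i * w i ≤
      (∑ i ∈ s, f i ^ p * w i) ^ (1 / p) * (∑ i ∈ s, g i ^ q * w i) ^ (1 / q) := by
  have hw_split : ∀ i ∈ s, w i ^ (1 / p) * w i ^ (1 / q) = w i := fun i hi => by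
    rw [← rpow_add' (hw i hi) (by simp [hpq.inv_add_inv_eq_one]), one_div, one_div,
      hpq.inv_add_inv_eq_one, rpow_one]
  have hpow : ∀ {r : ℝ}, r ≠ 0 → ∀ {x : ι → ℝ}, (∀ i ∈ s, 0 ≤ x i) →
      ∑ i ∈ s, (x i * w i ^ (1 / r)) ^ r = ∑ i ∈ s, x i ^ r * w i :=
    fun hr x hx => sum_congr rfl fun i hi => by
      rw [mul_rpow (hx i hi) (rpow_nonneg (hw i hi) _), ← rpow_mul (hw i hi),
        one_div_mul_cancel hr, rpow_one]
  calc ∑ i ∈ s, f i * g i * w i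
      = ∑ i ∈ s, f i * w i ^ (1 / p) * (g i * w i ^ (1 / q)) :=
        (sum_congr rfl fun i hi => by rw [mul_mul_mul_comm, hw_split i hi]).symm
    _ ≤ _ := inner_le_Lp_mul_Lq_of_nonneg s hpq
        (fun i hi => mul_nonneg (hf i hi) (rpow_nonneg (hw i hi) _))
        (fun i hi => mul_nonneg (hg i hi) (rpow_nonneg (hw i hi) _))
    _ = _ := by rw [hpow hpq.ne_zero hf, hpow hpq.symm.ne_zero hg]

theorem le_rpow_mul_of_le_mul_rpow_mul_rpow {p q C A S : ℝ} (hpq : p.HolderConjugate q)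
    (hC : 0 ≤ C) (hA : 0 ≤ A) (hS : 0 ≤ S) (h : S ≤ C * (A ^ (1 / p) * S ^ (1 / q))) :
    S ≤ C ^ p * A := by
  rcases hS.eq_or_lt with rfl | hS
  · positivity
  have hsplit : S ^ (1 / p) * S ^ (1 / q) = S := by
    rw [← rpow_add hS, one_div, one_div, hpq.inv_add_inv_eq_one, rpow_one]
  have hroot : S ^ (1 / p) ≤ C * A ^ (1 / p) :=
    le_of_mul_le_mul_right (by rw [hsplit, mul_assoc]; exact h) (rpow_pos_of_pos hS _)
  rw [one_div, rpow_inv_le_iff_of_pos hS.le (by positivity) hpq.pos, mul_rpow hC (by positivity),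
    ← rpow_mul hA, inv_mul_cancel₀ hpq.ne_zero, rpow_one] at hroot
  exact hroot

end Real

noncomputable def copsonTail (a w : ℕ → ℝ) (m n : ℕ) : ℝ :=
  ∑ i ∈ Icc n m, a i * w i / ∑ j ∈ Icc 1 i, w j

section copsonTail

variable {a w : ℕ → ℝ} {m n : ℕ}

theorem copsonTail_nonneg (ha : ∀ i, 0 ≤ a i) (hw : ∀ i, 0 ≤ w i) (n : ℕ) :
    0 ≤ copsonTail a w m n :=
  sum_nonneg fun i _ => div_nonneg (mul_nonneg (ha i) (hw i)) (sum_nonneg fun j _ => hw j)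

theorem copsonTail_eq_add (hn : n ≤ m) :
    copsonTail a w m n = a n * w n / ∑ j ∈ Icc 1 n, w j + copsonTail a w m (n + 1) := by
  rw [copsonTail, Icc_eq_cons_Ioc hn, sum_cons, ← Icc_add_one_left_eq_Ioc, copsonTail]

theorem copsonTail_succ_self : copsonTail a w m (m + 1) = 0 := by
  rw [copsonTail, Icc_eq_empty (by omega), sum_empty]

theorem copsonTail_rpow_sub_rpow_mul_le {p : ℝ} (hp : 1 ≤ p) (ha : ∀ i, 0 ≤ a i)
    (hw : ∀ i, 0 ≤ w i) (hn : n ≤ m) :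
    (copsonTail a w m n ^ p - copsonTail a w m (n + 1) ^ p) * ∑ j ∈ Icc 1 n, w j ≤
      p * (a n * copsonTail a w m n ^ (p - 1) * w n) := by
  have hT := copsonTail_nonneg (m := m) ha hw
  have hstep := copsonTail_eq_add (a := a) (w := w) hn
  set T := copsonTail a w m
  set W := ∑ j ∈ Icc 1 n, w j
  have hW : 0 ≤ W := sum_nonneg fun j _ => hw j
  have hdiff : T n - T (n + 1) = a n * w n / W := by rw [hstep]; ring
  have hcancel : a n * w n / W * W ≤ a n * w n := by
    rcases hW.eq_or_lt with hW0 | hW0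
    · simp [← hW0, mul_nonneg (ha n) (hw n)]
    · rw [div_mul_cancel₀ _ hW0.ne']
  calc (T n ^ p - T (n + 1) ^ p) * W
      ≤ p * T n ^ (p - 1) * (T n - T (n + 1)) * W := by
        gcongr
        refine Real.rpow_sub_rpow_le_mul_rpow_sub_one_mul_sub hp (hT _) ?_
        rw [← sub_nonneg, hdiff]
        exact div_nonneg (mul_nonneg (ha n) (hw n)) hW
    _ = p * T n ^ (p - 1) * (a n * w n / W * W) := by rw [hdiff]; ring
    _ ≤ p * T n ^ (p - 1) * (a n * w n) :=
        mul_le_mul_of_nonneg_left hcancel (mul_nonneg (by linarith) (Real.rpow_nonneg (hT n) _))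
    _ = p * (a n * T n ^ (p - 1) * w n) := by ring

theorem sum_copsonTail_rpow_mul_le {p : ℝ} (hp : 1 ≤ p) (ha : ∀ i, 0 ≤ a i)
    (hw : ∀ i, 0 ≤ w i) :
    ∑ n ∈ Icc 1 m, copsonTail a w m n ^ p * w n ≤
      p * ∑ n ∈ Icc 1 m, a n * copsonTail a w m n ^ (p - 1) * w n := by
  rw [sum_Icc_one_by_parts, copsonTail_succ_self, Real.zero_rpow (by positivity), zero_mul,
    add_zero, mul_sum]
  exact sum_le_sum fun n hn => copsonTail_rpow_sub_rpow_mul_le hp ha hw (mem_Icc.1 hn).2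

end copsonTail

theorem finite_weighted_copson_general (m : ℕ) (p : ℝ) (hp : 1 < p) (a w : ℕ → ℝ)
    (ha : ∀ i, 0 ≤ a i) (hw : ∀ i, 0 ≤ w i) :
    ∑ n ∈ Finset.Icc 1 m,
        (∑ i ∈ Finset.Icc n m, a i * w i / (∑ j ∈ Finset.Icc 1 i, w j)) ^ p * w n
      ≤ p ^ p * ∑ n ∈ Finset.Icc 1 m, a n ^ p * w n := by
  have hpq := Real.HolderConjugate.conjExponent hp
  have hT := copsonTail_nonneg (m := m) ha hw
  have hT_pow : ∀ n, (copsonTail a w m n ^ (p - 1)) ^ p.conjExponent = copsonTail a w m n ^ p :=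
    fun n => by rw [← Real.rpow_mul (hT n), hpq.sub_one_mul_conj]
  have holder := Real.inner_le_weighted_Lp_mul_Lq_of_nonneg (Icc 1 m) hpq (fun i _ => ha i)
    (fun i _ => Real.rpow_nonneg (hT i) (p - 1)) (fun i _ => hw i)
  simp only [hT_pow] at holder
  have hp0 : 0 ≤ p := by linarith
  exact Real.le_rpow_mul_of_le_mul_rpow_mul_rpow hpq hp0
    (sum_nonneg fun n _ => mul_nonneg (Real.rpow_nonneg (ha n) p) (hw n))
    (sum_nonneg fun n _ => mul_nonneg (Real.rpow_nonneg (hT n) p) (hw n))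
    ((sum_copsonTail_rpow_mul_le hp.le ha hw).trans (mul_le_mul_of_nonneg_left holder hp0))

/-- Finite weighted discrete Copson inequality. -/
theorem finite_weighted_copson (m : ℕ) (p : ℝ) (hp : 1 < p) (a w : ℕ → ℝ)
    (ha : ∀ i, 0 ≤ a i) (hw : ∀ i, 0 ≤ w i) (hw1 : 0 < w 1) :
    ∑ n ∈ Finset.Icc 1 m,
        (∑ i ∈ Finset.Icc n m, a i * w i / (∑ j ∈ Finset.Icc 1 i, w j)) ^ p * w n
      ≤ p ^ p * ∑ n ∈ Finset.Icc 1 m, a n ^ p * w n :=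
  finite_weighted_copson_general m p hp a w ha hw
end
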